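/- arXiv:1412.0459 — 5 statements merged into one kernel-verified Lean document; each statement's English description precedes it below -/
import Mathlib

section
/- For any real numbers l, m, r, s ≥ 0 with c := l·r − s − 1 > 0 and for any n ≥ e^{max(2mr/c, r)}, the series ∑_{i=1}^∞ i^s (log i)^m / (i^r + n)^l converges and satisfies (3^r + 1)^{−l} (log n / r)^m n^{−c/r} ≤ ∑_{i=1}^∞ i^s (log i)^m / (i^r + n)^l ≤ (3 + 2/c) (log n / r)^m n^{−c/r}. -/
/-!
Put `c = l r - s - 1` and `N = n ^ (1 / r)`, so that `log n / r = log N` and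
`n ^ (-c / r) = N ^ (-c)`. The terms with `i ≤ N` are each at most `N ^ s (log N) ^ m / n ^ l`,
so together at most `(log N) ^ m N ^ (-c)`. For `i ≥ N` the condition `2 m ≤ c log N` gives
`(log i) ^ m ≤ (log N) ^ m (i / N) ^ (c / 2)`, so these terms are dominated by
`(log N) ^ m N ^ (-c / 2) i ^ (-(1 + c / 2))`, whose tail telescopes against `i ^ (-c / 2)`.
For the lower bound, each of the at least `N` terms with `N ≤ i ≤ 3 N` is at least
`N ^ s (log N) ^ m / ((3 ^ r + 1) n) ^ l`.
-/

open Real Finset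

theorem log_rpow_le_mul_div_rpow {m p N x : ℝ} (hm : 0 ≤ m) (hN : 1 < N) (hx : N ≤ x)
    (hmp : m ≤ p * log N) : log x ^ m ≤ log N ^ m * (x / N) ^ p := by
  have hN0 : 0 < N := by linarith
  have hx0 : 0 < x := by linarith
  have hlogN : 0 < log N := log_pos hN
  have hu : 1 ≤ log x / log N := (one_le_div hlogN).2 (log_le_log hN0 hx)
  have hux : log x = log N * (log x / log N) := by field_simp
  -- for `u = log x / log N`: `u ^ m ≤ exp (m (u - 1)) ≤ exp (p (log x - log N))`
  have key : (log x / log N) ^ m ≤ (x / N) ^ p := by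
    rw [rpow_def_of_pos (by linarith), rpow_def_of_pos (div_pos hx0 hN0), log_div hx0.ne' hN0.ne']
    have h1 := log_le_sub_one_of_pos (show 0 < log x / log N by linarith)
    have h2 : m * (log x / log N - 1) ≤ p * log N * (log x / log N - 1) :=
      mul_le_mul_of_nonneg_right hmp (by linarith)
    have h3 : p * log N * (log x / log N - 1) = (log x - log N) * p := by field_simp
    apply exp_le_exp.2
    nlinarith
  rw [hux, mul_rpow hlogN.le (by linarith)]
  exact mul_le_mul_of_nonneg_left key (rpow_nonneg hlogN.le m)

theorem rpow_neg_add_one_le {p k : ℝ} (hp : 0 < p) (hk : 0 < k) :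
    (k + 1) ^ (-(p + 1)) ≤ (k ^ (-p) - (k + 1) ^ (-p)) / p := by
  have hk1 : 0 < k + 1 := by linarith
  -- `((k + 1) / k) ^ p ≥ 1 + p log ((k + 1) / k) ≥ 1 + p / (k + 1)`
  have bernoulli : 1 + p / (k + 1) ≤ ((k + 1) / k) ^ p := by
    have h := one_sub_inv_le_log_of_pos (show 0 < (k + 1) / k by positivity)
    rw [inv_div, show 1 - k / (k + 1) = 1 / (k + 1) by field_simp; ring] at h
    rw [rpow_def_of_pos (by positivity)]
    calc 1 + p / (k + 1) = p * (1 / (k + 1)) + 1 := by ring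
      _ ≤ log ((k + 1) / k) * p + 1 := by nlinarith
      _ ≤ _ := add_one_le_exp _
  have hkp : k ^ (-p) = (k + 1) ^ (-p) * ((k + 1) / k) ^ p := by
    rw [div_rpow hk1.le hk.le, rpow_neg hk.le, rpow_neg hk1.le]
    field_simp
  have hsucc : (k + 1) ^ (-(p + 1)) = (k + 1) ^ (-p) / (k + 1) := by
    rw [neg_add, rpow_add hk1, rpow_neg_one, div_eq_mul_inv]
  have hA : 0 < (k + 1) ^ (-p) := rpow_pos_of_pos hk1 _
  rw [hkp, hsucc, le_div_iff₀ hp]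
  calc (k + 1) ^ (-p) / (k + 1) * p = (k + 1) ^ (-p) * (p / (k + 1)) := by ring
    _ ≤ (k + 1) ^ (-p) * (((k + 1) / k) ^ p - 1) := by gcongr; linarith
    _ = _ := by ring

theorem sum_range_rpow_neg_le {p a : ℝ} (hp : 0 < p) (ha : 0 < a) (J : ℕ) :
    ∑ j ∈ range J, (a + (j + 1 : ℕ)) ^ (-(p + 1)) ≤ a ^ (-p) / p := by
  have hu : ∀ j : ℕ, 0 ≤ (a + j) ^ (-p) := fun j => rpow_nonneg (by positivity) _
  calc ∑ j ∈ range J, (a + (j + 1 : ℕ)) ^ (-(p + 1))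
      ≤ ∑ j ∈ range J, ((a + j) ^ (-p) - (a + (j + 1 : ℕ)) ^ (-p)) / p := by
        gcongr with j
        push_cast
        rw [← add_assoc]
        exact rpow_neg_add_one_le hp (by positivity)
    _ = (a ^ (-p) - (a + J) ^ (-p)) / p := by
        rw [← sum_div, sum_range_sub' (fun j : ℕ => (a + j) ^ (-p))]
        simp
    _ ≤ a ^ (-p) / p := by gcongr; linarith [hu J]

theorem summable_rpow_neg_nat_add {p a : ℝ} (hp : 0 < p) (ha : 0 < a) :
    Summable fun j : ℕ => (a + j) ^ (-(p + 1)) :=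
  (summable_nat_add_iff 1).1 <| summable_of_sum_range_le
    (fun _ => rpow_nonneg (by positivity) _) (sum_range_rpow_neg_le hp ha)

theorem tsum_rpow_neg_nat_add_le {p a : ℝ} (hp : 0 < p) (ha : 0 < a) :
    ∑' j : ℕ, (a + j) ^ (-(p + 1)) ≤ a ^ (-(p + 1)) + a ^ (-p) / p := by
  rw [(summable_rpow_neg_nat_add hp ha).tsum_eq_zero_add, Nat.cast_zero, add_zero]
  gcongr
  exact Real.tsum_le_of_sum_range_le (fun _ => rpow_nonneg (by positivity) _)
    (sum_range_rpow_neg_le hp ha)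

theorem monotoneOn_rpow_mul_log_rpow {s m : ℝ} (hs : 0 ≤ s) (hm : 0 ≤ m) :
    MonotoneOn (fun x : ℝ => x ^ s * log x ^ m) (Set.Ici 1) := by
  intro x (hx : 1 ≤ x) y _ hxy
  have hlogx : 0 ≤ log x := log_nonneg hx
  exact mul_le_mul (rpow_le_rpow (by linarith) hxy hs)
    (rpow_le_rpow hlogx (log_le_log (by linarith) hxy) hm) (rpow_nonneg hlogx _)
    (rpow_nonneg (by linarith) _)

noncomputable def seriesTerm (s m r l n x : ℝ) : ℝ := x ^ s * log x ^ m / (x ^ r + n) ^ l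

section

variable {s m r l n N x : ℝ}

theorem seriesTerm_nonneg (hn : 0 ≤ n) (hx : 1 ≤ x) : 0 ≤ seriesTerm s m r l n x :=
  div_nonneg (mul_nonneg (rpow_nonneg (by linarith) _) (rpow_nonneg (log_nonneg hx) _))
    (rpow_nonneg (add_nonneg (rpow_nonneg (by linarith) _) hn) _)

theorem seriesTerm_le_of_le (hs : 0 ≤ s) (hm : 0 ≤ m) (hl : 0 ≤ l) (hn : 0 < n)
    (hx : 1 ≤ x) (hxN : x ≤ N) : seriesTerm s m r l n x ≤ N ^ s * log N ^ m / n ^ l :=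
  div_le_div₀
    (mul_nonneg (rpow_nonneg (by linarith) _) (rpow_nonneg (log_nonneg (hx.trans hxN)) _))
    (monotoneOn_rpow_mul_log_rpow hs hm hx (hx.trans hxN) hxN) (rpow_pos_of_pos hn _)
    (rpow_le_rpow hn.le (le_add_of_nonneg_left (rpow_nonneg (by linarith) _)) hl)

theorem seriesTerm_le_of_ge {p : ℝ} (hm : 0 ≤ m) (hl : 0 ≤ l) (hn : 0 ≤ n) (hN : 1 < N)
    (hNx : N ≤ x) (hmp : m ≤ p * log N) :
    seriesTerm s m r l n x ≤ log N ^ m * N ^ (-p) * x ^ (s + p - l * r) := by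
  have hN0 : 0 < N := by linarith
  have hx0 : 0 < x := by linarith
  have hden : x ^ (l * r) ≤ (x ^ r + n) ^ l := by
    rw [mul_comm, rpow_mul hx0.le]
    exact rpow_le_rpow (rpow_nonneg hx0.le _) (le_add_of_nonneg_right hn) hl
  calc seriesTerm s m r l n x ≤ x ^ s * (log N ^ m * (x / N) ^ p) / x ^ (l * r) :=
        div_le_div₀ (mul_nonneg (rpow_nonneg hx0.le _)
            (mul_nonneg (rpow_nonneg (log_nonneg hN.le) _) (rpow_nonneg (by positivity) _)))
          (mul_le_mul_of_nonneg_left (log_rpow_le_mul_div_rpow hm hN hNx hmp)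
            (rpow_nonneg hx0.le _)) (rpow_pos_of_pos hx0 _) hden
    _ = log N ^ m * N ^ (-p) * x ^ (s + p - l * r) := by
        rw [div_rpow hx0.le hN0.le, rpow_neg hN0.le, rpow_sub hx0, rpow_add hx0]
        ring

theorem le_seriesTerm {C : ℝ} (hs : 0 ≤ s) (hm : 0 ≤ m) (hr : 0 ≤ r) (hl : 0 ≤ l)
    (hN : 1 ≤ N) (hNx : N ≤ x) (hxC : x ≤ C * N) :
    N ^ s * log N ^ m / ((C ^ r + 1) * N ^ r) ^ l ≤ seriesTerm s m r l (N ^ r) x := by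
  have hN0 : 0 < N := by linarith
  have hx0 : 0 < x := by linarith
  have hC : 0 < C := pos_of_mul_pos_left (by linarith) hN0.le
  refine div_le_div₀
    (mul_nonneg (rpow_nonneg hx0.le _) (rpow_nonneg (log_nonneg (hN.trans hNx)) _))
    (monotoneOn_rpow_mul_log_rpow hs hm hN (hN.trans hNx) hNx) (by positivity)
    (rpow_le_rpow (by positivity) ?_ hl)
  rw [add_mul, one_mul, ← mul_rpow hC.le hN0.le]
  gcongr

theorem rpow_add_one_sub_mul_eq (hN : 0 < N) :
    N ^ (s + 1 - l * r) = N * N ^ s / (N ^ r) ^ l := by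
  rw [← rpow_mul hN.le, rpow_sub hN, rpow_add hN, rpow_one, mul_comm r l]
  ring

theorem sum_range_floor_seriesTerm_le (hs : 0 ≤ s) (hm : 0 ≤ m) (hl : 0 ≤ l) (hN : 1 ≤ N) :
    ∑ i ∈ range ⌊N⌋₊, seriesTerm s m r l (N ^ r) (i + 1) ≤
      log N ^ m * N ^ (s + 1 - l * r) := by
  have hN0 : 0 < N := by linarith
  have hbound : ∀ i ∈ range ⌊N⌋₊,
      seriesTerm s m r l (N ^ r) (i + 1) ≤ N ^ s * log N ^ m / (N ^ r) ^ l := by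
    intro i hi
    have hiN : ((i + 1 : ℕ) : ℝ) ≤ N := (Nat.le_floor_iff hN0.le).1 (mem_range.1 hi)
    push_cast at hiN
    exact seriesTerm_le_of_le hs hm hl (rpow_pos_of_pos hN0 _) (by simp) hiN
  calc ∑ i ∈ range ⌊N⌋₊, seriesTerm s m r l (N ^ r) (i + 1)
      ≤ ⌊N⌋₊ * (N ^ s * log N ^ m / (N ^ r) ^ l) := by
        simpa using sum_le_card_nsmul _ _ _ hbound
    _ ≤ N * (N ^ s * log N ^ m / (N ^ r) ^ l) := by
        gcongr
        · exact div_nonneg (mul_nonneg (rpow_nonneg hN0.le _) (rpow_nonneg (log_nonneg hN) _))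
            (rpow_nonneg (rpow_nonneg hN0.le _) _)
        · exact Nat.floor_le hN0.le
    _ = log N ^ m * N ^ (s + 1 - l * r) := by rw [rpow_add_one_sub_mul_eq hN0]; ring

theorem tsum_seriesTerm_tail_le {p : ℝ} (hm : 0 ≤ m) (hl : 0 ≤ l) (hN : 1 < N) (hp : 0 < p)
    (hmp : m ≤ p * log N) (hdecay : s + p - l * r = -(p + 1)) :
    Summable (fun j : ℕ => seriesTerm s m r l (N ^ r) ((j + ⌊N⌋₊ : ℕ) + 1)) ∧
      ∑' j : ℕ, seriesTerm s m r l (N ^ r) ((j + ⌊N⌋₊ : ℕ) + 1) ≤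
        (1 + 1 / p) * log N ^ m * N ^ (-(2 * p)) := by
  have hN0 : 0 < N := by linarith
  set a : ℝ := ⌊N⌋₊ + 1
  have ha : N ≤ a := (Nat.lt_floor_add_one N).le
  have ha0 : 0 < a := hN0.trans_le ha
  set T := log N ^ m * N ^ (-p)
  have hT : 0 ≤ T := mul_nonneg (rpow_nonneg (log_nonneg hN.le) _) (rpow_nonneg hN0.le _)
  have hbound : ∀ j : ℕ,
      seriesTerm s m r l (N ^ r) ((j + ⌊N⌋₊ : ℕ) + 1) ≤ T * (a + j) ^ (-(p + 1)) := by
    intro j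
    rw [show ((j + ⌊N⌋₊ : ℕ) : ℝ) + 1 = a + j by push_cast; ring, ← hdecay]
    exact seriesTerm_le_of_ge hm hl (rpow_nonneg hN0.le _) hN
      (ha.trans (le_add_of_nonneg_right (Nat.cast_nonneg j))) hmp
  have hmaj := (summable_rpow_neg_nat_add hp ha0).mul_left T
  have hsum := Summable.of_nonneg_of_le
    (fun j => seriesTerm_nonneg (rpow_nonneg hN0.le _) (le_add_of_nonneg_left (Nat.cast_nonneg _)))
    hbound hmaj
  refine ⟨hsum, ?_⟩
  calc ∑' j : ℕ, seriesTerm s m r l (N ^ r) ((j + ⌊N⌋₊ : ℕ) + 1)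
      ≤ ∑' j : ℕ, T * (a + j) ^ (-(p + 1)) := hsum.tsum_le_tsum hbound hmaj
    _ ≤ T * (a ^ (-(p + 1)) + a ^ (-p) / p) := by
        rw [tsum_mul_left]
        gcongr
        exact tsum_rpow_neg_nat_add_le hp ha0
    _ ≤ T * (N ^ (-p) + N ^ (-p) / p) := by
        have hap : a ^ (-p) ≤ N ^ (-p) := rpow_le_rpow_of_nonpos hN0 ha (by linarith)
        have hap1 : a ^ (-(p + 1)) ≤ a ^ (-p) :=
          rpow_le_rpow_of_exponent_le (hN.le.trans ha) (by linarith)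
        exact mul_le_mul_of_nonneg_left
          (add_le_add (hap1.trans hap) (div_le_div_of_nonneg_right hap hp.le)) hT
    _ = (1 + 1 / p) * log N ^ m * N ^ (-(2 * p)) := by
        rw [show -(2 * p) = -p + -p by ring, rpow_add hN0]
        simp only [T]
        field_simp

theorem summable_seriesTerm (hm : 0 ≤ m) (hl : 0 ≤ l) (hN : 1 < N) (hc : 0 < l * r - s - 1)
    (hmc : 2 * m ≤ (l * r - s - 1) * log N) :
    Summable (fun i : ℕ => seriesTerm s m r l (N ^ r) (i + 1)) :=
  (summable_nat_add_iff ⌊N⌋₊).1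
    (tsum_seriesTerm_tail_le (s := s) (r := r) hm hl hN (half_pos hc) (by linarith) (by ring)).1

theorem tsum_seriesTerm_le (hs : 0 ≤ s) (hm : 0 ≤ m) (hl : 0 ≤ l) (hN : 1 < N)
    (hc : 0 < l * r - s - 1) (hmc : 2 * m ≤ (l * r - s - 1) * log N) :
    ∑' i : ℕ, seriesTerm s m r l (N ^ r) (i + 1) ≤
      (2 + 2 / (l * r - s - 1)) * log N ^ m * N ^ (s + 1 - l * r) := by
  have htail := (tsum_seriesTerm_tail_le (s := s) (r := r) hm hl hN (half_pos hc) (by linarith)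
    (by ring)).2
  rw [show -(2 * ((l * r - s - 1) / 2)) = s + 1 - l * r by ring,
    show 1 / ((l * r - s - 1) / 2) = 2 / (l * r - s - 1) by field_simp] at htail
  rw [← (summable_seriesTerm hm hl hN hc hmc).sum_add_tsum_nat_add ⌊N⌋₊]
  linarith [sum_range_floor_seriesTerm_le (r := r) hs hm hl hN.le]

theorem le_tsum_seriesTerm (hs : 0 ≤ s) (hm : 0 ≤ m) (hr : 0 ≤ r) (hl : 0 ≤ l)
    (hN : 1 ≤ N)
    (hsum : Summable (fun i : ℕ => seriesTerm s m r l (N ^ r) (i + 1))) :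
    (3 ^ r + 1) ^ (-l) * log N ^ m * N ^ (s + 1 - l * r) ≤
      ∑' i : ℕ, seriesTerm s m r l (N ^ r) (i + 1) := by
  have hN0 : 0 < N := by linarith
  set K := ⌊N⌋₊
  set LB := N ^ s * log N ^ m / ((3 ^ r + 1) * N ^ r) ^ l
  have hLB : 0 ≤ LB := div_nonneg
    (mul_nonneg (rpow_nonneg hN0.le _) (rpow_nonneg (log_nonneg hN) _)) (by positivity)
  -- the `K + 1` terms with `K ≤ i ≤ 2 K` have `N ≤ i + 1 ≤ 3 N`
  have hbound : ∀ i ∈ Ico K (2 * K + 1), LB ≤ seriesTerm s m r l (N ^ r) (i + 1) := by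
    intro i hi
    obtain ⟨hKi, hi2⟩ := mem_Ico.1 hi
    have hKN : (K : ℝ) ≤ N := Nat.floor_le hN0.le
    have hNK : N < K + 1 := Nat.lt_floor_add_one N
    have h1 : (K : ℝ) ≤ i := by exact_mod_cast hKi
    have h2 : (i : ℝ) + 1 ≤ 2 * K + 1 := by exact_mod_cast hi2
    exact le_seriesTerm hs hm hr hl hN (by linarith) (by linarith)
  calc (3 ^ r + 1) ^ (-l) * log N ^ m * N ^ (s + 1 - l * r) = N * LB := by
        simp only [LB]
        rw [rpow_add_one_sub_mul_eq hN0, mul_rpow (by positivity) (by positivity),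
          rpow_neg (by positivity)]
        field_simp
    _ ≤ (K + 1 : ℕ) * LB := by
        gcongr
        exact_mod_cast (Nat.lt_floor_add_one N).le
    _ ≤ ∑ i ∈ Ico K (2 * K + 1), seriesTerm s m r l (N ^ r) (i + 1) := by
        simpa [show 2 * K + 1 - K = K + 1 by omega] using card_nsmul_le_sum _ _ _ hbound
    _ ≤ ∑' i : ℕ, seriesTerm s m r l (N ^ r) (i + 1) :=
        hsum.sum_le_tsum _ fun i _ => seriesTerm_nonneg (by positivity) (by simp)

end

theorem series_two_sided_bound_general (l m r s n : ℝ)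
    (hl : 0 ≤ l) (hm : 0 ≤ m) (hs : 0 ≤ s)
    (hc : 0 < l * r - s - 1)
    (hn : Real.exp (max (2 * m * r / (l * r - s - 1)) r) ≤ n) :
    Summable (fun i : ℕ =>
      ((i + 1 : ℝ) ^ s * Real.log (i + 1) ^ m) / ((i + 1 : ℝ) ^ r + n) ^ l) ∧
    ((3 : ℝ) ^ r + 1) ^ (-l) * (Real.log n / r) ^ m * n ^ (-(l * r - s - 1) / r) ≤
      (∑' i : ℕ, ((i + 1 : ℝ) ^ s * Real.log (i + 1) ^ m) / ((i + 1 : ℝ) ^ r + n) ^ l) ∧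
    (∑' i : ℕ, ((i + 1 : ℝ) ^ s * Real.log (i + 1) ^ m) / ((i + 1 : ℝ) ^ r + n) ^ l) ≤
      (3 + 2 / (l * r - s - 1)) * (Real.log n / r) ^ m * n ^ (-(l * r - s - 1) / r) := by
  have hr : 0 < r := pos_of_mul_pos_right (by linarith) hl
  have hn0 : 0 < n := (exp_pos _).trans_le hn
  obtain ⟨N, hN0, rfl⟩ : ∃ N, 0 < N ∧ N ^ r = n :=
    ⟨n ^ r⁻¹, rpow_pos_of_pos hn0 _, rpow_inv_rpow hn0.le hr.ne'⟩
  have hmax : max (2 * m * r / (l * r - s - 1)) r ≤ r * log N := by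
    rw [← log_rpow hN0, le_log_iff_exp_le (rpow_pos_of_pos hN0 _)]
    exact hn
  have hN : 1 < N := by
    have hlogN : 1 ≤ log N := by
      nlinarith [(le_max_right (2 * m * r / (l * r - s - 1)) r).trans hmax]
    exact (log_pos_iff hN0.le).1 (by linarith)
  have hmc : 2 * m ≤ (l * r - s - 1) * log N := by
    have h := (le_max_left _ _).trans hmax
    rw [div_le_iff₀ hc] at h
    nlinarith
  have hlog : log (N ^ r) / r = log N := by rw [log_rpow hN0]; field_simp
  have hpow : (N ^ r) ^ (-(l * r - s - 1) / r) = N ^ (s + 1 - l * r) := by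
    rw [← rpow_mul hN0.le]; congr 1; field_simp; ring
  have hsum := summable_seriesTerm hm hl hN hc hmc
  rw [hlog, hpow]
  refine ⟨hsum, le_tsum_seriesTerm hs hm hr.le hl hN.le hsum, ?_⟩
  have hB : 0 ≤ log N ^ m * N ^ (s + 1 - l * r) :=
    mul_nonneg (rpow_nonneg (log_pos hN).le _) (rpow_nonneg hN0.le _)
  refine (tsum_seriesTerm_le hs hm hl hN hc hmc).trans ?_
  linarith [mul_le_mul_of_nonneg_right
    (show 2 + 2 / (l * r - s - 1) ≤ 3 + 2 / (l * r - s - 1) by linarith) hB]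

/-- Lemma 10.2: two-sided bound for the series `∑ i^s (log i)^m / (i^r + n)^l`. -/
theorem series_two_sided_bound (l m r s n : ℝ)
    (hl : 0 ≤ l) (hm : 0 ≤ m) (hr : 0 ≤ r) (hs : 0 ≤ s)
    (hc : 0 < l * r - s - 1)
    (hn : Real.exp (max (2 * m * r / (l * r - s - 1)) r) ≤ n) :
    Summable (fun i : ℕ =>
      ((i + 1 : ℝ) ^ s * Real.log (i + 1) ^ m) / ((i + 1 : ℝ) ^ r + n) ^ l) ∧
    ((3 : ℝ) ^ r + 1) ^ (-l) * (Real.log n / r) ^ m * n ^ (-(l * r - s - 1) / r) ≤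
      (∑' i : ℕ, ((i + 1 : ℝ) ^ s * Real.log (i + 1) ^ m) / ((i + 1 : ℝ) ^ r + n) ^ l) ∧
    (∑' i : ℕ, ((i + 1 : ℝ) ^ s * Real.log (i + 1) ^ m) / ((i + 1 : ℝ) ^ r + n) ^ l) ≤
      (3 + 2 / (l * r - s - 1)) * (Real.log n / r) ^ m * n ^ (-(l * r - s - 1) / r) :=
  series_two_sided_bound_general l m r s n hl hm hs hc hn
end

section
/- Let θ_0 = (θ_{0,i}) satisfy θ_{0,i}^2 i^{1+2β} ≤ M for all i (hyperrectangle Θ^β(M)), let l = (l_i) satisfy ∑_{i=j}^{j+K−1} l_i^2 ≤ R^2 j^{−1−2q} for all j > j_0 (hence |l_i| ≤ R K^{1/2+q} i^{−1/2−q} up to a constant for q ≤ −1/2, or simply |l_i| ≲ i^{−1/2−q}), and let κ_i satisfy C^{−2} i^{−2p} ≤ κ_i^2 ≤ C^2 i^{−2p}. If β + q < 1 + 2α + 2p and β + q > 0, then the bias B_n^L(α) = |∑_i l_i θ_{0,i} i^{1+2α} κ_i^{−2} / (i^{1+2α} κ_i^{−2} + n)| is bounded above by a constant (depending on M, R, C,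 K, p, q, α, β) times n^{−(β+q)/(1+2α+2p)} for all n ≥ e^{1+2α+2p}. -/
/-!
Each term of the bias series is bounded by a constant times `i ^ (r - c - 1) / (i ^ r + n)`, where
`r = 1 + 2α + 2p` and `c = β + q`, using `|θ_i| ≤ √M i^(-1/2-β)`, `|l_i| ≤ R' i^(-1/2-q)` and
`i^(1+2α) κ_i⁻² ≤ C² i^r`. Splitting the resulting series at `N ≈ n^(1/r)`, the terms with
`i ≤ N` are at most `i^(r-c-1) / n`, which sum to `O(N^(r-c) / n)`, and the terms with `i > N`
are at most `i^(-c-1)`, which sum to `O(N^(-c))`; both are `O(n^(-c/r))`.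
-/

open Real Finset

lemma mul_rpow_sub_one_le_rpow_sub_rpow {t x : ℝ} (ht₀ : 0 ≤ t) (ht₁ : t ≤ 1) (hx : 0 ≤ x) :
    t * (x + 1) ^ (t - 1) ≤ (x + 1) ^ t - x ^ t := by
  have hx₁ : 0 < x + 1 := by linarith
  have hs : -1 ≤ -(x + 1)⁻¹ := neg_le_neg (inv_le_one_of_one_le₀ (by linarith))
  have bernoulli := rpow_one_add_le_one_add_mul_self hs ht₀ ht₁
  have hbase : 1 + -(x + 1)⁻¹ = x / (x + 1) := by field_simp; ring
  rw [hbase, div_rpow hx hx₁.le, div_le_iff₀ (rpow_pos_of_pos hx₁ t)] at bernoulli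
  rw [rpow_sub_one hx₁.ne']
  have : (1 + t * -(x + 1)⁻¹) * (x + 1) ^ t = (x + 1) ^ t - t * ((x + 1) ^ t / (x + 1)) := by
    ring
  linarith

lemma sum_range_rpow_sub_one_le {t : ℝ} (ht : 0 < t) (N : ℕ) :
    ∑ i ∈ range N, ((i : ℝ) + 1) ^ (t - 1) ≤ (1 + 1 / t) * (N : ℝ) ^ t := by
  have hNt : 0 ≤ (N : ℝ) ^ t := by positivity
  rcases le_or_gt 1 t with ht₁ | ht₁
  · calc ∑ i ∈ range N, ((i : ℝ) + 1) ^ (t - 1) ≤ ∑ _i ∈ range N, (N : ℝ) ^ (t - 1) := by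
          gcongr with i hi
          exact_mod_cast mem_range.1 hi
      _ = (N : ℝ) ^ t := by
          rw [sum_const, card_range, nsmul_eq_mul, mul_comm,
            ← rpow_add_one' N.cast_nonneg (by rw [sub_add_cancel]; exact ht.ne'), sub_add_cancel]
      _ ≤ (1 + 1 / t) * (N : ℝ) ^ t :=
          le_mul_of_one_le_left hNt (le_add_of_nonneg_right (by positivity))
  · calc ∑ i ∈ range N, ((i : ℝ) + 1) ^ (t - 1)
        ≤ ∑ i ∈ range N, (((i : ℝ) + 1) ^ t - (i : ℝ) ^ t) / t := by
          gcongr with i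
          rw [le_div_iff₀ ht, mul_comm]
          exact mul_rpow_sub_one_le_rpow_sub_rpow ht.le ht₁.le i.cast_nonneg
      _ = (N : ℝ) ^ t / t := by
          have telescope := sum_range_sub (fun i : ℕ => (i : ℝ) ^ t) N
          push_cast at telescope
          rw [← sum_div, telescope, zero_rpow ht.ne', sub_zero]
      _ ≤ (1 + 1 / t) * (N : ℝ) ^ t := by
          rw [div_eq_mul_one_div, mul_comm]; gcongr; linarith

lemma sum_range_rpow_nat_add_le {c : ℝ} (hc : 0 < c) {N : ℕ} (hN : 0 < N) (m : ℕ) :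
    ∑ i ∈ range m, ((N : ℝ) + (i + 1 : ℕ)) ^ (-c - 1) ≤ (N : ℝ) ^ (-c) / c := by
  have hN' : (0 : ℝ) < N := by exact_mod_cast hN
  have hanti : AntitoneOn (fun x : ℝ => x ^ (-c - 1)) (Set.Icc N (N + m)) :=
    fun x hx y _ hxy => rpow_le_rpow_of_nonpos (hN'.trans_le hx.1) hxy (by linarith)
  have hint : ∫ x in (N : ℝ)..N + m, x ^ (-c - 1) = ((N : ℝ) ^ (-c) - (N + m : ℝ) ^ (-c)) / c := by
    rw [integral_rpow (Or.inr ⟨by linarith, ?_⟩)]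
    · rw [sub_add_cancel, ← neg_div_neg_eq, neg_sub, neg_neg]
    · rw [Set.uIcc_of_le (by simp)]; exact fun h => hN'.not_ge h.1
  calc ∑ i ∈ range m, ((N : ℝ) + (i + 1 : ℕ)) ^ (-c - 1)
      ≤ ∫ x in (N : ℝ)..N + m, x ^ (-c - 1) := hanti.sum_le_integral
    _ ≤ (N : ℝ) ^ (-c) / c := by
        rw [hint]; gcongr; exact sub_le_self _ (by positivity)

section
variable {r c n x : ℝ}

lemma rpow_div_rpow_add_le_rpow_div (hx : 0 < x) (hn : 0 < n) :
    x ^ (r - c - 1) / (x ^ r + n) ≤ x ^ (r - c - 1) / n := by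
  gcongr; exact le_add_of_nonneg_left (rpow_nonneg hx.le r)

lemma rpow_div_rpow_add_le_rpow (hx : 0 < x) (hn : 0 ≤ n) :
    x ^ (r - c - 1) / (x ^ r + n) ≤ x ^ (-c - 1) := by
  calc x ^ (r - c - 1) / (x ^ r + n) ≤ x ^ (r - c - 1) / x ^ r := by
        gcongr; exact le_add_of_nonneg_right hn
    _ = x ^ (-c - 1) := by rw [← rpow_sub hx]; ring_nf

lemma summable_rpow_div_rpow_add (hc : 0 < c) (hn : 0 ≤ n) :
    Summable fun i : ℕ => ((i : ℝ) + 1) ^ (r - c - 1) / (((i : ℝ) + 1) ^ r + n) := by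
  have hpseries : Summable fun i : ℕ => ((i + 1 : ℕ) : ℝ) ^ (-c - 1) :=
    (summable_nat_add_iff 1).2 (summable_nat_rpow.2 (by linarith))
  push_cast at hpseries
  exact hpseries.of_nonneg_of_le (fun i => by positivity)
    fun i => rpow_div_rpow_add_le_rpow (by positivity) hn

theorem tsum_rpow_div_rpow_add_le (hc : 0 < c) (hcr : c < r) (hn : 1 ≤ n) :
    ∑' i : ℕ, ((i : ℝ) + 1) ^ (r - c - 1) / (((i : ℝ) + 1) ^ r + n) ≤
      (1 + 1 / (r - c) + 2 ^ c / c) * n ^ (-c / r) := by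
  have hr : 0 < r := hc.trans hcr
  have hn₀ : 0 < n := one_pos.trans_le hn
  set g : ℕ → ℝ := fun i => ((i : ℝ) + 1) ^ (r - c - 1) / (((i : ℝ) + 1) ^ r + n)
  set N := ⌊n ^ (1 / r)⌋₊
  have hN_le : (N : ℝ) ≤ n ^ (1 / r) := Nat.floor_le (by positivity)
  have hN_pos : 0 < N := Nat.floor_pos.2 (one_le_rpow hn (by positivity))
  have hN_ge : n ^ (1 / r) / 2 ≤ N := by
    have := Nat.lt_floor_add_one (n ^ (1 / r))
    have : (1 : ℝ) ≤ N := by exact_mod_cast hN_pos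
    linarith
  have head : ∑ i ∈ range N, g i ≤ (1 + 1 / (r - c)) * n ^ (-c / r) := by
    calc ∑ i ∈ range N, g i ≤ (∑ i ∈ range N, ((i : ℝ) + 1) ^ (r - c - 1)) / n := by
          rw [sum_div]; gcongr with i
          exact rpow_div_rpow_add_le_rpow_div (by positivity) hn₀
      _ ≤ (1 + 1 / (r - c)) * (N : ℝ) ^ (r - c) / n := by
          gcongr; exact sum_range_rpow_sub_one_le (by linarith) N
      _ ≤ (1 + 1 / (r - c)) * (n ^ (1 / r)) ^ (r - c) / n := by
          gcongr
      _ = (1 + 1 / (r - c)) * n ^ (-c / r) := by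
          rw [← rpow_mul hn₀.le, mul_div_assoc, ← rpow_sub_one hn₀.ne']
          congr 2; field_simp; ring
  have tail : ∑' i : ℕ, g (i + N) ≤ 2 ^ c / c * n ^ (-c / r) := by
    calc ∑' i : ℕ, g (i + N) ≤ (N : ℝ) ^ (-c) / c := by
          refine tsum_le_of_sum_range_le (fun i => by positivity) fun m => ?_
          refine (sum_le_sum fun i _ => ?_).trans (sum_range_rpow_nat_add_le hc hN_pos m)
          have hcast : ((i + N : ℕ) : ℝ) + 1 = N + (i + 1 : ℕ) := by push_cast; ring
          simp only [g, hcast]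
          exact rpow_div_rpow_add_le_rpow (by positivity) hn₀.le
      _ ≤ (n ^ (1 / r) / 2) ^ (-c) / c :=
          div_le_div_of_nonneg_right
            (rpow_le_rpow_of_nonpos (by positivity) hN_ge (by linarith)) hc.le
      _ = 2 ^ c / c * n ^ (-c / r) := by
          rw [div_rpow (by positivity) zero_le_two, ← rpow_mul hn₀.le, rpow_neg zero_le_two]
          field_simp
  rw [← (summable_rpow_div_rpow_add hc hn₀.le).sum_add_tsum_nat_add N, add_mul]
  exact add_le_add head tail
end

lemma abs_le_sqrt_mul_rpow_of_sq_mul_rpow_le {θ M x a : ℝ} (hx : 0 < x)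
    (h : θ ^ 2 * x ^ a ≤ M) : |θ| ≤ √M * x ^ (-a / 2) := by
  have hθ : θ ^ 2 ≤ M * x ^ (-a) := by
    rwa [rpow_neg hx.le, ← div_eq_mul_inv, le_div_iff₀ (rpow_pos_of_pos hx a)]
  calc |θ| ≤ √(M * x ^ (-a)) := abs_le_sqrt hθ
    _ = √M * x ^ (-a / 2) := by
        rw [sqrt_mul' _ (by positivity), sqrt_eq_rpow (x ^ (-a)), ← rpow_mul hx.le]
        ring_nf

lemma div_add_le_mul_div_add {x a k n : ℝ} (hx : 0 < x) (ha : 0 < a) (hn : 0 ≤ n) (hk : 1 ≤ k)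
    (hxa : x ≤ k * a) : x / (x + n) ≤ k * (a / (a + n)) := by
  rw [mul_div_assoc', div_le_div_iff₀ (by positivity) (by positivity)]
  nlinarith [mul_le_mul_of_nonneg_left hk (mul_nonneg hx.le ha.le)]

lemma rpow_mul_inv_sq_le {x κ C p e : ℝ} (hx : 0 < x) (hC : 0 < C)
    (hκ : C⁻¹ ^ 2 * x ^ (-(2 * p)) ≤ κ ^ 2) : x ^ e * κ⁻¹ ^ 2 ≤ C ^ 2 * x ^ (e + 2 * p) := by
  have hκ' : (κ ^ 2)⁻¹ ≤ C ^ 2 * x ^ (2 * p) := by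
    simpa only [mul_inv, inv_pow, inv_inv, rpow_neg hx.le] using inv_anti₀ (by positivity) hκ
  calc x ^ e * κ⁻¹ ^ 2 ≤ x ^ e * (C ^ 2 * x ^ (2 * p)) := by rw [inv_pow]; gcongr
    _ = C ^ 2 * x ^ (e + 2 * p) := by rw [rpow_add hx]; ring

lemma abs_bias_term_le {x l θ κ n R' C M α β p q : ℝ} (hx : 0 < x) (hC : 0 < C)
    (hC₁ : 1 ≤ C ^ 2) (hn : 0 ≤ n) (hθ : θ ^ 2 * x ^ (1 + 2 * β) ≤ M)
    (hl : |l| ≤ R' * x ^ (-1 / 2 - q)) (hκ : C⁻¹ ^ 2 * x ^ (-(2 * p)) ≤ κ ^ 2) :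
    |l * θ * (x ^ (1 + 2 * α) * κ⁻¹ ^ 2) / (x ^ (1 + 2 * α) * κ⁻¹ ^ 2 + n)| ≤
      R' * √M * C ^ 2 *
        (x ^ (1 + 2 * α + 2 * p - (β + q) - 1) / (x ^ (1 + 2 * α + 2 * p) + n)) := by
  set w := x ^ (1 + 2 * α) * κ⁻¹ ^ 2
  have hκ₀ : 0 < κ ^ 2 := lt_of_lt_of_le (by positivity) hκ
  have hw : 0 < w := mul_pos (rpow_pos_of_pos hx _) (by rw [inv_pow]; exact inv_pos.2 hκ₀)
  have hfrac : w / (w + n) ≤ C ^ 2 * (x ^ (1 + 2 * α + 2 * p) / (x ^ (1 + 2 * α + 2 * p) + n)) :=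
    div_add_le_mul_div_add hw (by positivity) hn hC₁ (rpow_mul_inv_sq_le hx hC hκ)
  have hexp : x ^ (-1 / 2 - q) * x ^ (-(1 + 2 * β) / 2) * x ^ (1 + 2 * α + 2 * p) =
      x ^ (1 + 2 * α + 2 * p - (β + q) - 1) := by
    rw [← rpow_add hx, ← rpow_add hx]; ring_nf
  calc |l * θ * w / (w + n)| = |l| * |θ| * (w / (w + n)) := by
        rw [abs_div, abs_mul, abs_mul, abs_of_pos hw, abs_of_pos (by positivity : 0 < w + n),
          mul_div_assoc]
    _ ≤ R' * x ^ (-1 / 2 - q) * (√M * x ^ (-(1 + 2 * β) / 2)) *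
          (C ^ 2 * (x ^ (1 + 2 * α + 2 * p) / (x ^ (1 + 2 * α + 2 * p) + n))) := by
        have hR' : 0 ≤ R' * x ^ (-1 / 2 - q) := (abs_nonneg l).trans hl
        gcongr
        exact abs_le_sqrt_mul_rpow_of_sq_mul_rpow_le hx hθ
    _ = _ := by rw [← hexp]; ring

theorem bias_upper_bound_general (p q R' C M α β : ℝ)
    (hR' : 0 < R') (hC : 0 < C) (hM : 0 < M)
    (hβq : 0 < β + q) (hβq' : β + q < 1 + 2 * α + 2 * p)
    (θ l κ : ℕ → ℝ)
    (hθ : ∀ i : ℕ, 1 ≤ i → (θ i) ^ 2 * (i : ℝ) ^ (1 + 2 * β) ≤ M)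
    (hl : ∀ i : ℕ, 1 ≤ i → |l i| ≤ R' * (i : ℝ) ^ (-1 / 2 - q))
    (hκ : ∀ i : ℕ, 1 ≤ i →
      C⁻¹ ^ 2 * (i : ℝ) ^ (-(2 * p)) ≤ (κ i) ^ 2 ∧ (κ i) ^ 2 ≤ C ^ 2 * (i : ℝ) ^ (-(2 * p))) :
    ∃ C' > 0, ∀ n : ℝ, Real.exp (1 + 2 * α + 2 * p) ≤ n →
      Summable (fun i : ℕ =>
        l (i + 1) * θ (i + 1) * ((i + 1 : ℝ) ^ (1 + 2 * α) * ((κ (i + 1))⁻¹) ^ 2) /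
          ((i + 1 : ℝ) ^ (1 + 2 * α) * ((κ (i + 1))⁻¹) ^ 2 + n)) ∧
      |∑' i : ℕ, l (i + 1) * θ (i + 1) * ((i + 1 : ℝ) ^ (1 + 2 * α) * ((κ (i + 1))⁻¹) ^ 2) /
          ((i + 1 : ℝ) ^ (1 + 2 * α) * ((κ (i + 1))⁻¹) ^ 2 + n)| ≤
        C' * n ^ (-(β + q) / (1 + 2 * α + 2 * p)) := by
  have hC₁ : 1 ≤ C ^ 2 := by
    have h := hκ 1 le_rfl
    simp only [Nat.cast_one, one_rpow, mul_one, inv_pow] at h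
    nlinarith [(inv_le_iff_one_le_mul₀ (pow_pos hC 2)).1 (h.1.trans h.2)]
  set B := R' * √M * C ^ 2
  set K := 1 + 1 / (1 + 2 * α + 2 * p - (β + q)) + 2 ^ (β + q) / (β + q)
  have hK : 0 < K := by
    have := sub_pos.2 hβq'
    positivity
  refine ⟨B * K, by positivity, fun n hn => ?_⟩
  have hn₁ : 1 ≤ n := (one_le_exp (by linarith)).trans hn
  have hg := (summable_rpow_div_rpow_add (r := 1 + 2 * α + 2 * p) hβq (by linarith)).mul_left B
  have hterm : ∀ i : ℕ, ‖l (i + 1) * θ (i + 1) * ((i + 1 : ℝ) ^ (1 + 2 * α) * ((κ (i + 1))⁻¹) ^ 2) /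
      ((i + 1 : ℝ) ^ (1 + 2 * α) * ((κ (i + 1))⁻¹) ^ 2 + n)‖ ≤
        B * (((i : ℝ) + 1) ^ (1 + 2 * α + 2 * p - (β + q) - 1) /
          (((i : ℝ) + 1) ^ (1 + 2 * α + 2 * p) + n)) := fun i => by
    have hi : ((i + 1 : ℕ) : ℝ) = i + 1 := by push_cast; rfl
    have hi₁ : 1 ≤ i + 1 := Nat.le_add_left 1 i
    rw [norm_eq_abs]
    exact abs_bias_term_le (by positivity) hC hC₁ (by linarith) (hi ▸ hθ _ hi₁) (hi ▸ hl _ hi₁)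
      (hi ▸ (hκ _ hi₁).1)
  refine ⟨hg.of_norm_bounded hterm, ?_⟩
  calc _ ≤ B * ∑' i : ℕ, ((i : ℝ) + 1) ^ (1 + 2 * α + 2 * p - (β + q) - 1) /
          (((i : ℝ) + 1) ^ (1 + 2 * α + 2 * p) + n) := by
        rw [← tsum_mul_left]; exact tsum_of_norm_bounded hg.hasSum hterm
    _ ≤ B * (K * n ^ (-(β + q) / (1 + 2 * α + 2 * p))) := by
        gcongr; exact tsum_rpow_div_rpow_add_le hβq hβq' hn₁
    _ = B * K * n ^ (-(β + q) / (1 + 2 * α + 2 * p)) := by ring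

/-- Upper bound for the bias of the posterior mean of a linear functional over the
hyperrectangle `Θ^β(M)`: `B_n^L(α) ≲ n^{-(β+q)/(1+2α+2p)}`. -/
theorem bias_upper_bound (p q R' C M α β : ℝ)
    (hp : 0 ≤ p) (hR' : 0 < R') (hC : 0 < C) (hM : 0 < M)
    (hβq : 0 < β + q) (hβq' : β + q < 1 + 2 * α + 2 * p)
    (θ l κ : ℕ → ℝ)
    (hθ : ∀ i : ℕ, 1 ≤ i → (θ i) ^ 2 * (i : ℝ) ^ (1 + 2 * β) ≤ M)
    (hl : ∀ i : ℕ, 1 ≤ i → |l i| ≤ R' * (i : ℝ) ^ (-1 / 2 - q))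
    (hκ : ∀ i : ℕ, 1 ≤ i →
      C⁻¹ ^ 2 * (i : ℝ) ^ (-(2 * p)) ≤ (κ i) ^ 2 ∧ (κ i) ^ 2 ≤ C ^ 2 * (i : ℝ) ^ (-(2 * p))) :
    ∃ C' > 0, ∀ n : ℝ, Real.exp (1 + 2 * α + 2 * p) ≤ n →
      Summable (fun i : ℕ =>
        l (i + 1) * θ (i + 1) * ((i + 1 : ℝ) ^ (1 + 2 * α) * ((κ (i + 1))⁻¹) ^ 2) /
          ((i + 1 : ℝ) ^ (1 + 2 * α) * ((κ (i + 1))⁻¹) ^ 2 + n)) ∧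
      |∑' i : ℕ, l (i + 1) * θ (i + 1) * ((i + 1 : ℝ) ^ (1 + 2 * α) * ((κ (i + 1))⁻¹) ^ 2) /
          ((i + 1 : ℝ) ^ (1 + 2 * α) * ((κ (i + 1))⁻¹) ^ 2 + n)| ≤
        C' * n ^ (-(β + q) / (1 + 2 * α + 2 * p)) :=
  bias_upper_bound_general p q R' C M α β hR' hC hM hβq hβq' θ l κ hθ hl hκ
end

section
/- Let θ_0 ∈ Θ^β(M), i.e., θ_{0,i}^2 ≤ M i^{−1−2β} for all i, with β > 0, and let κ_i satisfy C^{−2} i^{−2p} ≤ κ_i^2 ≤ C^2 i^{−2p}. Then for any α ≥ 0 and 2β < 1 + 2α + 2p, the squared bias of the posterior mean of the full parameter, ∑_{i=1}^∞ (i^{1+2α} κ_i^{−2} / (i^{1+2α} κ_i^{−2} + n))^2 θ_{0,i}^2, is bounded above by a constant times n^{−2β/(1+2α+2p)} for all sufficiently large n. -/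
open Real

lemma tail_step (b x : ℝ) (hb : 0 < b) (hx : 1 ≤ x) :
    b * (x + 1) ^ (-b - 1) ≤ x ^ (-b) - (x + 1) ^ (-b) := by
  have hx0 : (0:ℝ) < x := lt_of_lt_of_le one_pos hx
  have hlt : x < x + 1 := by linarith
  obtain ⟨c, hc, hceq⟩ := exists_hasDerivAt_eq_slope (fun t => t ^ (-b))
      (fun t => (-b) * t ^ (-b - 1)) hlt
      (fun t ht => (Real.continuousAt_rpow_const t (-b)
        (Or.inl (ne_of_gt (lt_of_lt_of_le hx0 ht.1)))).continuousWithinAt)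
      (fun t ht => by
        have := Real.hasDerivAt_rpow_const (x := t) (p := -b)
          (Or.inl (ne_of_gt (lt_trans hx0 ht.1)))
        simpa [sub_eq_add_neg] using this)
  have hc0 : 0 < c := lt_trans hx0 hc.1
  have key : x ^ (-b) - (x + 1) ^ (-b) = b * c ^ (-b - 1) := by
    have : (-b) * c ^ (-b - 1) = ((x+1) ^ (-b) - x ^ (-b)) / (x + 1 - x) := hceq
    rw [show x + 1 - x = 1 by ring, div_one] at this
    linarith
  rw [key]
  have : (x + 1) ^ (-b - 1) ≤ c ^ (-b - 1) :=
    Real.rpow_le_rpow_of_nonpos hc0 hc.2.le (by linarith)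
  exact mul_le_mul_of_nonneg_left this hb.le

lemma tail_sum (b : ℝ) (hb : 0 < b) (N : ℕ) (hN : 1 ≤ N) :
    ∑' i : ℕ, ((N + i : ℝ) + 1) ^ (-b - 1) ≤ (N : ℝ) ^ (-b) / b := by
  have hsum0 : Summable (fun j : ℕ => (j : ℝ) ^ (-b - 1)) :=
    Real.summable_nat_rpow.mpr (by linarith)
  have hsum : Summable (fun i : ℕ => ((N + i : ℝ) + 1) ^ (-b - 1)) := by
    have := (summable_nat_add_iff (N + 1)).mpr hsum0
    refine this.congr fun i => ?_
    push_cast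
    ring_nf
  refine Summable.tsum_le_of_sum_le hsum fun s => ?_
  obtain ⟨m, hm⟩ := s.exists_nat_subset_range
  calc ∑ i ∈ s, ((N + i : ℝ) + 1) ^ (-b - 1)
      ≤ ∑ i ∈ Finset.range m, ((N + i : ℝ) + 1) ^ (-b - 1) := by
        refine Finset.sum_le_sum_of_subset_of_nonneg hm fun i hi _ =>
          Real.rpow_nonneg (by positivity) _
    _ ≤ ∑ i ∈ Finset.range m, (((N + i : ℝ)) ^ (-b) / b - ((N + (i+1) : ℝ)) ^ (-b) / b) := by
        refine Finset.sum_le_sum fun i _ => ?_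
        have hx : (1:ℝ) ≤ (N + i : ℝ) := by
          have h1 : (1:ℝ) ≤ (N:ℝ) := by exact_mod_cast hN
          have h2 : (0:ℝ) ≤ (i:ℝ) := Nat.cast_nonneg i
          linarith
        have := tail_step b ((N:ℝ) + i) hb hx
        have h2 : ((N + (i+1) : ℝ)) = ((N:ℝ) + i) + 1 := by push_cast; ring
        rw [h2]
        rw [div_sub_div_same, le_div_iff₀ hb]
        linarith [this]
    _ = ((N + (0:ℕ) : ℝ)) ^ (-b) / b - ((N + (m:ℕ) : ℝ)) ^ (-b) / b := by
        have h := Finset.sum_range_sub' (fun i => ((N + i : ℝ)) ^ (-b) / b) m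
        push_cast at h ⊢
        exact h
    _ ≤ (N : ℝ) ^ (-b) / b := by
        have : (0:ℝ) ≤ ((N + (m:ℕ) : ℝ)) ^ (-b) / b :=
          div_nonneg (Real.rpow_nonneg (by positivity) _) hb.le
        simp only [Nat.cast_zero, add_zero]
        linarith

/-- Upper bound for the squared bias of the posterior mean of the full parameter over the
hyperrectangle `Θ^β(M)`: it is `≲ n^{-2β/(1+2α+2p)}`. -/
theorem full_parameter_squared_bias_upper_bound (p C M α β : ℝ)
    (hp : 0 ≤ p) (hC : 0 < C) (hM : 0 < M) (hβ : 0 < β) (hα : 0 ≤ α)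
    (hβ' : 2 * β < 1 + 2 * α + 2 * p)
    (θ κ : ℕ → ℝ)
    (hθ : ∀ i : ℕ, 1 ≤ i → (θ i) ^ 2 ≤ M * (i : ℝ) ^ (-1 - 2 * β))
    (hκ : ∀ i : ℕ, 1 ≤ i →
      C⁻¹ ^ 2 * (i : ℝ) ^ (-(2 * p)) ≤ (κ i) ^ 2 ∧ (κ i) ^ 2 ≤ C ^ 2 * (i : ℝ) ^ (-(2 * p))) :
    ∃ C' > 0, ∃ n₀ : ℝ, ∀ n : ℝ, n₀ ≤ n →
      (∑' i : ℕ, ((i + 1 : ℝ) ^ (1 + 2 * α) * ((κ (i + 1))⁻¹) ^ 2 /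
          ((i + 1 : ℝ) ^ (1 + 2 * α) * ((κ (i + 1))⁻¹) ^ 2 + n)) ^ 2 * (θ (i + 1)) ^ 2) ≤
        C' * n ^ (-(2 * β) / (1 + 2 * α + 2 * p)) := by
  set s : ℝ := 1 + 2 * α + 2 * p with hs_def
  have hs1 : (1:ℝ) ≤ s := by simp only [hs_def]; linarith
  have hs0 : (0:ℝ) < s := by linarith
  have hsβ : 2 * β < s := hβ'
  refine ⟨C ^ 4 * M * 2 ^ (2 * s) + M / (2 * β), by positivity, 1, fun n hn => ?_⟩
  have hn0 : (0:ℝ) < n := by linarith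
  set e : ℝ := -(2 * β) / s with he_def
  -- the terms
  set r : ℕ → ℝ := fun i => (i + 1 : ℝ) ^ (1 + 2 * α) * ((κ (i + 1))⁻¹) ^ 2 with hr_def
  set g : ℕ → ℝ := fun i => (r i / (r i + n)) ^ 2 * (θ (i + 1)) ^ 2 with hg_def
  have hi1pos : ∀ i : ℕ, (0:ℝ) < (i:ℝ) + 1 := fun i => by positivity
  have hr0 : ∀ i, 0 ≤ r i := fun i =>
    mul_nonneg (Real.rpow_nonneg (hi1pos i).le _) (sq_nonneg _)
  have hrn : ∀ i, 0 < r i + n := fun i => by have := hr0 i; linarith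
  have hratio0 : ∀ i, 0 ≤ r i / (r i + n) := fun i => div_nonneg (hr0 i) (hrn i).le
  have hratio1 : ∀ i, r i / (r i + n) ≤ 1 := fun i =>
    (div_le_one (hrn i)).mpr (by linarith)
  have hratio2 : ∀ i, r i / (r i + n) ≤ r i / n := fun i =>
    div_le_div_of_nonneg_left (hr0 i) hn0 (by linarith [hr0 i])
  have hθ' : ∀ i : ℕ, (θ (i+1)) ^ 2 ≤ M * ((i:ℝ) + 1) ^ (-1 - 2 * β) := by
    intro i
    have := hθ (i+1) (Nat.le_add_left 1 i)
    push_cast at this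
    exact this
  have hθ0 : ∀ i : ℕ, (0:ℝ) ≤ (θ (i+1))^2 := fun i => sq_nonneg _
  -- bound on r
  have hrle : ∀ i : ℕ, r i ≤ C ^ 2 * ((i:ℝ) + 1) ^ s := by
    intro i
    obtain ⟨hκlo, _⟩ := hκ (i+1) (Nat.le_add_left 1 i)
    push_cast at hκlo
    have hbpos : (0:ℝ) < C⁻¹ ^ 2 * ((i:ℝ) + 1) ^ (-(2 * p)) := by positivity
    have hκ2pos : (0:ℝ) < (κ (i+1))^2 := lt_of_lt_of_le hbpos hκlo
    have hinv : ((κ (i+1))⁻¹) ^ 2 ≤ C ^ 2 * ((i:ℝ) + 1) ^ (2 * p) := by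
      have h1 : ((κ (i+1))⁻¹) ^ 2 = ((κ (i+1)) ^ 2)⁻¹ := by rw [inv_pow]
      rw [h1]
      have h2 := inv_anti₀ hbpos hκlo
      refine le_trans h2 (le_of_eq ?_)
      rw [mul_inv, ← Real.rpow_neg (hi1pos i).le, neg_neg]
      rw [inv_pow, inv_inv]
    calc r i ≤ (i + 1 : ℝ) ^ (1 + 2 * α) * (C ^ 2 * ((i:ℝ) + 1) ^ (2 * p)) := by
          exact mul_le_mul_of_nonneg_left hinv (Real.rpow_nonneg (hi1pos i).le _)
      _ = C ^ 2 * ((i:ℝ) + 1) ^ s := by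
          have hsplit : ((i:ℝ) + 1) ^ s = ((i:ℝ)+1) ^ (1 + 2*α) * ((i:ℝ)+1) ^ (2*p) := by
            rw [hs_def]; exact Real.rpow_add (hi1pos i) _ _
          rw [hsplit]; ring
  -- pointwise bounds on g
  have hgb1 : ∀ i, g i ≤ M * ((i:ℝ) + 1) ^ (-1 - 2 * β) := by
    intro i
    have h1 : (r i / (r i + n)) ^ 2 ≤ 1 := by
      rw [sq]
      calc r i / (r i + n) * (r i / (r i + n)) ≤ 1 * 1 :=
        mul_le_mul (hratio1 i) (hratio1 i) (hratio0 i) zero_le_one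
      _ = 1 := mul_one 1
    calc g i ≤ 1 * (θ (i+1))^2 := mul_le_mul_of_nonneg_right h1 (hθ0 i)
      _ = (θ (i+1))^2 := one_mul _
      _ ≤ M * ((i:ℝ) + 1) ^ (-1 - 2 * β) := hθ' i
  have hgb2 : ∀ i, g i ≤ C ^ 4 * M * n⁻¹ ^ 2 * ((i:ℝ) + 1) ^ (2 * s - 1 - 2 * β) := by
    intro i
    have h1 : r i / (r i + n) ≤ C ^ 2 * ((i:ℝ) + 1) ^ s / n :=
      le_trans (hratio2 i) ((div_le_div_iff_of_pos_right hn0).mpr (hrle i))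
    have h2 : (r i / (r i + n)) ^ 2 ≤ (C ^ 2 * ((i:ℝ) + 1) ^ s / n) ^ 2 :=
      pow_le_pow_left₀ (hratio0 i) h1 2
    calc g i ≤ (C ^ 2 * ((i:ℝ) + 1) ^ s / n) ^ 2 * (M * ((i:ℝ) + 1) ^ (-1 - 2 * β)) :=
          mul_le_mul h2 (hθ' i) (hθ0 i) (by positivity)
      _ = C ^ 4 * M * n⁻¹ ^ 2 * (((i:ℝ) + 1) ^ s * ((i:ℝ) + 1) ^ s * ((i:ℝ)+1) ^ (-1-2*β)) := by
          field_simp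
      _ = C ^ 4 * M * n⁻¹ ^ 2 * ((i:ℝ) + 1) ^ (2 * s - 1 - 2 * β) := by
          rw [← Real.rpow_add (hi1pos i), ← Real.rpow_add (hi1pos i)]
          ring_nf
  -- summability
  have hcomp_sum : Summable (fun i : ℕ => M * ((i:ℝ) + 1) ^ (-1 - 2 * β)) := by
    have h0 : Summable (fun j : ℕ => (j : ℝ) ^ (-1 - 2 * β)) :=
      Real.summable_nat_rpow.mpr (by linarith)
    have h1 := (summable_nat_add_iff 1).mpr h0
    exact (h1.congr fun i => by push_cast; ring_nf).mul_left M
  have hg0 : ∀ i, 0 ≤ g i := fun i => mul_nonneg (sq_nonneg _) (hθ0 i)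
  have hg_sum : Summable g := Summable.of_nonneg_of_le hg0 hgb1 hcomp_sum
  -- choose N
  set N : ℕ := ⌈n ^ (1 / s)⌉₊ with hN_def
  have hns0 : (0:ℝ) < n ^ (1 / s) := Real.rpow_pos_of_pos hn0 _
  have hns1 : (1:ℝ) ≤ n ^ (1 / s) := Real.one_le_rpow hn (by positivity)
  have hNge : n ^ (1 / s) ≤ (N:ℝ) := Nat.le_ceil _
  have hN1 : 1 ≤ N := by
    have : (1:ℝ) ≤ (N:ℝ) := le_trans hns1 hNge
    exact_mod_cast this
  have hNpos : (0:ℝ) < (N:ℝ) := by exact_mod_cast Nat.lt_of_lt_of_le Nat.zero_lt_one hN1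
  have hNle : (N:ℝ) ≤ 2 * n ^ (1 / s) := by
    have h1 : (N:ℝ) < n ^ (1 / s) + 1 := Nat.ceil_lt_add_one hns0.le
    linarith
  -- split the sum
  have hsplit := Summable.sum_add_tsum_nat_add N hg_sum
  rw [← hsplit]
  -- head bound
  have hexp0 : (0:ℝ) ≤ 2 * s - 1 - 2 * β := by linarith
  have hhead : ∑ i ∈ Finset.range N, g i ≤
      C ^ 4 * M * n⁻¹ ^ 2 * (N:ℝ) ^ (2 * s - 2 * β) := by
    have hterm : ∀ i ∈ Finset.range N, g i ≤
        C ^ 4 * M * n⁻¹ ^ 2 * (N:ℝ) ^ (2 * s - 1 - 2 * β) := by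
      intro i hi
      refine le_trans (hgb2 i) ?_
      have hle : ((i:ℝ) + 1) ≤ (N:ℝ) := by
        have := Finset.mem_range.mp hi
        exact_mod_cast Nat.succ_le_of_lt this
      exact mul_le_mul_of_nonneg_left
        (Real.rpow_le_rpow (hi1pos i).le hle hexp0) (by positivity)
    calc ∑ i ∈ Finset.range N, g i
        ≤ ∑ _i ∈ Finset.range N, C ^ 4 * M * n⁻¹ ^ 2 * (N:ℝ) ^ (2 * s - 1 - 2 * β) :=
          Finset.sum_le_sum hterm
      _ = (N:ℝ) * (C ^ 4 * M * n⁻¹ ^ 2 * (N:ℝ) ^ (2 * s - 1 - 2 * β)) := by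
          rw [Finset.sum_const, Finset.card_range, nsmul_eq_mul]
      _ = C ^ 4 * M * n⁻¹ ^ 2 * (N:ℝ) ^ (2 * s - 2 * β) := by
          rw [show (N:ℝ) ^ (2*s - 2*β) = (N:ℝ) ^ ((1:ℝ) + (2*s - 1 - 2*β)) by ring_nf,
            Real.rpow_add hNpos, Real.rpow_one]
          ring
  -- tail bound
  have htail : ∑' i : ℕ, g (i + N) ≤ M * ((N:ℝ) ^ (-(2*β)) / (2*β)) := by
    have hts : Summable (fun i : ℕ => g (i + N)) := (summable_nat_add_iff N).mpr hg_sum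
    have hcs : Summable (fun i : ℕ => M * ((N + i : ℝ) + 1) ^ (-(2*β) - 1)) := by
      have h0 : Summable (fun j : ℕ => (j : ℝ) ^ (-(2*β) - 1)) :=
        Real.summable_nat_rpow.mpr (by linarith)
      have h1 := (summable_nat_add_iff (N+1)).mpr h0
      exact (h1.congr fun i => by push_cast; ring_nf).mul_left M
    have hle : ∀ i : ℕ, g (i + N) ≤ M * ((N + i : ℝ) + 1) ^ (-(2*β) - 1) := by
      intro i
      have hbe : ((N + i : ℝ) + 1) = ((↑(i+N):ℝ) + 1) := by push_cast; ring
      rw [hbe, show (-(2*β) - 1 : ℝ) = -1 - 2*β by ring]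
      exact hgb1 (i+N)
    calc ∑' i : ℕ, g (i + N) ≤ ∑' i : ℕ, M * ((N + i : ℝ) + 1) ^ (-(2*β) - 1) :=
          Summable.tsum_le_tsum hle hts hcs
      _ = M * ∑' i : ℕ, ((N + i : ℝ) + 1) ^ (-(2*β) - 1) := tsum_mul_left
      _ ≤ M * ((N:ℝ) ^ (-(2*β)) / (2*β)) :=
          mul_le_mul_of_nonneg_left (tail_sum (2*β) (by linarith) N hN1) hM.le
  -- convert N-powers into n-powers
  have hNpow1 : n⁻¹ ^ 2 * (N:ℝ) ^ (2 * s - 2 * β) ≤ 2 ^ (2 * s) * n ^ e := by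
    have h1 : (N:ℝ) ^ (2 * s - 2 * β) ≤ (2 * n ^ (1/s)) ^ (2 * s - 2 * β) :=
      Real.rpow_le_rpow hNpos.le hNle (by linarith)
    have h2 : (2 * n ^ (1/s) : ℝ) ^ (2 * s - 2 * β) =
        2 ^ (2 * s - 2 * β) * (n ^ (1/s)) ^ (2 * s - 2 * β) :=
      Real.mul_rpow (by norm_num) hns0.le
    have h3 : ((n:ℝ) ^ (1/s)) ^ (2 * s - 2 * β) = n ^ ((1/s) * (2 * s - 2 * β)) :=
      (Real.rpow_mul hn0.le (1/s) (2*s-2*β)).symm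
    have h4 : (1/s) * (2 * s - 2 * β) = e + 2 := by
      rw [he_def]; field_simp; ring
    have h5 : (2:ℝ) ^ (2 * s - 2 * β) ≤ 2 ^ (2 * s) :=
      Real.rpow_le_rpow_of_exponent_le one_le_two (by linarith)
    have h6 : n⁻¹ ^ 2 * n ^ (e + 2) = n ^ e := by
      rw [Real.rpow_add hn0, show (2:ℝ) = ((2:ℕ):ℝ) by norm_num, Real.rpow_natCast]
      field_simp
    calc n⁻¹ ^ 2 * (N:ℝ) ^ (2 * s - 2 * β)
        ≤ n⁻¹ ^ 2 * (2 ^ (2 * s - 2 * β) * n ^ (e + 2)) := by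
          rw [← h4, ← h3, ← h2]
          exact mul_le_mul_of_nonneg_left h1 (by positivity)
      _ = 2 ^ (2 * s - 2 * β) * (n⁻¹ ^ 2 * n ^ (e + 2)) := by ring
      _ = 2 ^ (2 * s - 2 * β) * n ^ e := by rw [h6]
      _ ≤ 2 ^ (2 * s) * n ^ e :=
          mul_le_mul_of_nonneg_right h5 (Real.rpow_nonneg hn0.le _)
  have hNpow2 : (N:ℝ) ^ (-(2*β)) ≤ n ^ e := by
    have h1 : (N:ℝ) ^ (-(2*β)) ≤ (n ^ (1/s)) ^ (-(2*β)) :=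
      Real.rpow_le_rpow_of_nonpos hns0 hNge (by linarith)
    refine le_trans h1 (le_of_eq ?_)
    rw [← Real.rpow_mul hn0.le, he_def]
    congr 1
    field_simp
  -- combine
  have hfinal : ∑ i ∈ Finset.range N, g i + ∑' i : ℕ, g (i + N) ≤
      (C ^ 4 * M * 2 ^ (2 * s) + M / (2 * β)) * n ^ e := by
    have hA : ∑ i ∈ Finset.range N, g i ≤ C ^ 4 * M * (2 ^ (2 * s) * n ^ e) := by
      refine le_trans hhead ?_
      calc C ^ 4 * M * n⁻¹ ^ 2 * (N:ℝ) ^ (2 * s - 2 * β)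
          = C ^ 4 * M * (n⁻¹ ^ 2 * (N:ℝ) ^ (2 * s - 2 * β)) := by ring
        _ ≤ C ^ 4 * M * (2 ^ (2 * s) * n ^ e) :=
            mul_le_mul_of_nonneg_left hNpow1 (by positivity)
    have hB : ∑' i : ℕ, g (i + N) ≤ M / (2 * β) * n ^ e := by
      refine le_trans htail ?_
      calc M * ((N:ℝ) ^ (-(2*β)) / (2*β)) = M / (2*β) * (N:ℝ) ^ (-(2*β)) := by ring
        _ ≤ M / (2*β) * n ^ e := mul_le_mul_of_nonneg_left hNpow2 (by positivity)
    calc ∑ i ∈ Finset.range N, g i + ∑' i : ℕ, g (i + N)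
        ≤ C ^ 4 * M * (2 ^ (2 * s) * n ^ e) + M / (2 * β) * n ^ e := add_le_add hA hB
      _ = (C ^ 4 * M * 2 ^ (2 * s) + M / (2 * β)) * n ^ e := by ring
  exact hfinal
end

section
/- For r > 0 and s ≥ 0 with 2r − s − 1 > 0, and for n sufficiently large, ∑_{i=1}^∞ n i^s / (i^r + n)^2 ≤ (3 + 2/(2r − s − 1)) n^{−(r − s − 1)/r}. -/
open Real

/-- Tangent-line / MVT bound: for `0 < a < b`, `c > 0`,
`c * (b - a) * b ^ (-c-1) ≤ a ^ (-c) - b ^ (-c)`. -/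
lemma mvt_rpow_neg (c a b : ℝ) (hc : 0 < c) (ha : 0 < a) (hab : a < b) :
    c * (b - a) * b ^ (-c - 1) ≤ a ^ (-c) - b ^ (-c) := by
  have hb : 0 < b := ha.trans hab
  have hba : 0 < b - a := by linarith
  obtain ⟨ξ, hξ, hslope⟩ := exists_hasDerivAt_eq_slope (fun x => x ^ (-c))
    (fun x => -c * x ^ (-c - 1)) hab
    (by
      apply ContinuousOn.rpow_const continuousOn_id
      intro x hx
      exact Or.inl (ne_of_gt (lt_of_lt_of_le ha hx.1)))
    (by
      intro x hx
      exact Real.hasDerivAt_rpow_const (Or.inl (ne_of_gt (ha.trans hx.1))))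
  have hξ0 : 0 < ξ := ha.trans hξ.1
  have hξb : ξ ≤ b := le_of_lt hξ.2
  have h1 : b ^ (-c - 1) ≤ ξ ^ (-c - 1) :=
    Real.rpow_le_rpow_of_nonpos hξ0 hξb (by linarith)
  have h2 : c * (b - a) * b ^ (-c - 1) ≤ c * (b - a) * ξ ^ (-c - 1) :=
    mul_le_mul_of_nonneg_left h1 (mul_nonneg hc.le hba.le)
  have h3 : c * ξ ^ (-c - 1) = (a ^ (-c) - b ^ (-c)) / (b - a) := by
    have h := hslope
    rw [eq_div_iff hba.ne'] at h
    rw [eq_div_iff hba.ne']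
    linear_combination -h
  have h4 : c * (b - a) * ξ ^ (-c - 1) = a ^ (-c) - b ^ (-c) := by
    have h5 : c * ξ ^ (-c - 1) * (b - a) = (a ^ (-c) - b ^ (-c)) / (b - a) * (b - a) := by
      rw [h3]
    rw [div_mul_cancel₀ _ hba.ne'] at h5
    linear_combination h5
  exact h2.trans_eq h4

/-- Telescoping tail bound: `∑_{j∈Ico M k} (j+1)^{-(c+1)} ≤ M^{-c}/c`. -/
lemma tail_sum_le (c : ℝ) (hc : 0 < c) (M : ℕ) (hM : 1 ≤ M) (k : ℕ) :
    ∑ j ∈ Finset.Ico M k, ((j : ℝ) + 1) ^ (-(c + 1)) ≤ (M : ℝ) ^ (-c) / c := by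
  have key : ∀ k, M ≤ k →
      ∑ j ∈ Finset.Ico M k, ((j : ℝ) + 1) ^ (-(c + 1)) ≤
        ((M : ℝ) ^ (-c) - (k : ℝ) ^ (-c)) / c := by
    intro k hk
    induction k with
    | zero => omega
    | succ k ih =>
      rcases Nat.lt_or_ge M (k + 1) with h | h
      · have hMk : M ≤ k := by omega
        rw [Finset.sum_Ico_succ_top hMk]
        have hk0 : (0 : ℝ) < k := by
          have : 1 ≤ k := le_trans hM hMk
          exact_mod_cast this
        have hmvt := mvt_rpow_neg c k (k + 1) hc hk0 (by linarith)
        have hterm : ((k : ℝ) + 1) ^ (-(c + 1)) ≤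
            ((k : ℝ) ^ (-c) - ((k : ℝ) + 1) ^ (-c)) / c := by
          rw [le_div_iff₀ hc]
          have h2 : c * 1 * ((k : ℝ) + 1) ^ (-c - 1) ≤
              (k : ℝ) ^ (-c) - ((k : ℝ) + 1) ^ (-c) := by
            calc c * 1 * ((k : ℝ) + 1) ^ (-c - 1)
                = c * (((k : ℝ) + 1) - k) * ((k : ℝ) + 1) ^ (-c - 1) := by ring_nf
              _ ≤ _ := hmvt
          calc ((k : ℝ) + 1) ^ (-(c + 1)) * c = c * 1 * ((k : ℝ) + 1) ^ (-c - 1) := by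
                rw [show -(c + 1) = -c - 1 by ring]; ring
            _ ≤ _ := h2
        have hih := ih hMk
        have hcast : ((k + 1 : ℕ) : ℝ) = (k : ℝ) + 1 := by push_cast; ring
        rw [hcast]
        calc ∑ j ∈ Finset.Ico M k, ((j : ℝ) + 1) ^ (-(c + 1)) + ((k : ℝ) + 1) ^ (-(c + 1))
            ≤ ((M : ℝ) ^ (-c) - (k : ℝ) ^ (-c)) / c +
              ((k : ℝ) ^ (-c) - ((k : ℝ) + 1) ^ (-c)) / c := add_le_add hih hterm
          _ = ((M : ℝ) ^ (-c) - ((k : ℝ) + 1) ^ (-c)) / c := by ring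
      · have : M = k + 1 := by omega
        subst this
        simp
  rcases Nat.lt_or_ge k M with h | h
  · rw [Finset.Ico_eq_empty (by omega)]
    simp only [Finset.sum_empty]
    positivity
  · refine (key k h).trans ?_
    have hk0 : (0 : ℝ) ≤ (k : ℝ) ^ (-c) := by positivity
    apply div_le_div_of_nonneg_right _ hc.le
    linarith

set_option maxHeartbeats 1000000 in
/-- For `r > 0`, `s ≥ 0` with `2r - s - 1 > 0` and large `n`,
`∑ n i^s/(i^r+n)² ≤ (3 + 2/(2r-s-1)) n^{-(r-s-1)/r}`. -/
theorem weighted_series_upper_bound (r s : ℝ) (hr : 0 < r) (hs : 0 ≤ s)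
    (hc : 0 < 2 * r - s - 1) :
    ∃ n₀ : ℝ, ∀ n : ℝ, n₀ ≤ n →
      (∑' i : ℕ, n * (i + 1 : ℝ) ^ s / ((i + 1 : ℝ) ^ r + n) ^ 2) ≤
        (3 + 2 / (2 * r - s - 1)) * n ^ (-(r - s - 1) / r) := by
  set c := 2 * r - s - 1 with hcdef
  -- T = 2^{1/c}/(2^{1/c}-1), the threshold for n^{1/r}
  have h2c : (1 : ℝ) < (2 : ℝ) ^ (1 / c) := by
    rw [Real.one_lt_rpow_iff_of_pos (by norm_num : (0:ℝ) < 2)]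
    left
    exact ⟨by norm_num, by positivity⟩
  set T : ℝ := (2 : ℝ) ^ (1 / c) / ((2 : ℝ) ^ (1 / c) - 1) with hTdef
  have hT1 : 1 < T := by
    rw [hTdef, lt_div_iff₀ (by linarith)]
    linarith
  refine ⟨max 2 (T ^ r), fun n hn => ?_⟩
  have hn2 : (2 : ℝ) ≤ n := le_trans (le_max_left _ _) hn
  have hnT : T ^ r ≤ n := le_trans (le_max_right _ _) hn
  have hn0 : (0 : ℝ) < n := by linarith
  -- t = n^{1/r}
  set t : ℝ := n ^ (1 / r) with htdef
  have ht1 : T ≤ t := by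
    have hTr : (T ^ r) ^ (1 / r) = T := by
      rw [← Real.rpow_mul (by linarith : (0:ℝ) ≤ T), mul_one_div, div_self hr.ne',
        Real.rpow_one]
    calc T = (T ^ r) ^ (1 / r) := hTr.symm
      _ ≤ t := Real.rpow_le_rpow (by positivity) hnT (by positivity)
  have ht_pos : (1 : ℝ) < t := lt_of_lt_of_le hT1 ht1
  have htr : t ^ r = n := by
    rw [htdef, ← Real.rpow_mul (le_of_lt hn0), one_div, inv_mul_cancel₀ (ne_of_gt hr),
      Real.rpow_one]
  set M : ℕ := ⌊t⌋₊ with hMdef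
  have hM1 : 1 ≤ M := Nat.one_le_floor_iff t |>.mpr (le_of_lt ht_pos)
  have hMt : (M : ℝ) ≤ t := Nat.floor_le (by linarith)
  have htM : t < M + 1 := Nat.lt_floor_add_one t
  -- key property: t - 1 ≥ t * 2^{-1/c}, hence M ≥ t * 2^{-1/c}
  have hM_lb : t * (2 : ℝ) ^ (-(1 / c)) ≤ (M : ℝ) := by
    have h1 : t * (2 : ℝ) ^ (-(1 / c)) ≤ t - 1 := by
      rw [Real.rpow_neg (by norm_num)]
      rw [mul_comm, ← div_eq_inv_mul]
      rw [div_le_iff₀ (by linarith)]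
      -- (t-1) * 2^{1/c} ≥ t follows from t ≥ T
      have hTmul : T * ((2:ℝ) ^ (1/c) - 1) = (2:ℝ) ^ (1/c) := by
        rw [hTdef, div_mul_cancel₀]
        exact sub_ne_zero.mpr (ne_of_gt h2c)
      nlinarith [mul_le_mul_of_nonneg_right ht1 (by linarith : (0:ℝ) ≤ (2:ℝ) ^ (1/c) - 1)]
    linarith
  have hM_pos : (0 : ℝ) < t * (2 : ℝ) ^ (-(1 / c)) := by positivity
  -- M^{-c} ≤ 2 * t^{-c}
  have hMc : (M : ℝ) ^ (-c) ≤ 2 * t ^ (-c) := by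
    have hstep := Real.rpow_le_rpow_of_nonpos hM_pos hM_lb (by linarith : -c ≤ 0)
    calc (M : ℝ) ^ (-c) ≤ (t * (2 : ℝ) ^ (-(1 / c))) ^ (-c) := hstep
      _ = t ^ (-c) * ((2 : ℝ) ^ (-(1 / c))) ^ (-c) := by
          rw [Real.mul_rpow (by linarith) (by positivity)]
      _ = t ^ (-c) * (2 : ℝ) ^ (-(1 / c) * -c) := by
          rw [← Real.rpow_mul (by norm_num : (0:ℝ) ≤ 2)]
      _ = t ^ (-c) * 2 := by
          rw [show -(1 / c) * -c = 1 / c * c by ring, one_div,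
            inv_mul_cancel₀ (ne_of_gt hc), Real.rpow_one]
      _ = 2 * t ^ (-c) := by ring
  -- the target quantity
  have hexp : -(r - s - 1) / r = (s + 1) / r - 1 := by field_simp; ring
  set B : ℝ := n ^ (-(r - s - 1) / r) with hBdef
  have hB_pos : 0 < B := Real.rpow_pos_of_pos hn0 _
  set f : ℕ → ℝ := fun i => n * ((i : ℝ) + 1) ^ s / (((i : ℝ) + 1) ^ r + n) ^ 2 with hfdef
  have hf_pos : ∀ i, 0 ≤ f i := by
    intro i
    have h1 : (0:ℝ) < (i : ℝ) + 1 := by positivity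
    have h2 : (0:ℝ) < ((i : ℝ) + 1) ^ r := Real.rpow_pos_of_pos h1 _
    have h3 : (0:ℝ) < ((i : ℝ) + 1) ^ s := Real.rpow_pos_of_pos h1 _
    rw [hfdef]
    positivity
  -- head bound: each term with i < M is ≤ n^{s/r}/n
  have head_bound : ∑ i ∈ Finset.range M, f i ≤ B := by
    have hterm : ∀ i ∈ Finset.range M, f i ≤ t ^ s / n := by
      intro i hi
      rw [Finset.mem_range] at hi
      have hi1 : ((i : ℝ) + 1) ≤ t := by
        have : (i : ℝ) + 1 ≤ M := by
          have h' : (i : ℕ) + 1 ≤ M := hi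
          exact_mod_cast h'
        linarith
      have hi0 : (0:ℝ) < (i : ℝ) + 1 := by positivity
      have hs_le : ((i : ℝ) + 1) ^ s ≤ t ^ s :=
        Real.rpow_le_rpow (le_of_lt hi0) hi1 hs
      have h2 : (0:ℝ) < ((i : ℝ) + 1) ^ r := Real.rpow_pos_of_pos hi0 _
      have h3 : (0:ℝ) < ((i : ℝ) + 1) ^ s := Real.rpow_pos_of_pos hi0 _
      have hden : n ^ 2 ≤ (((i : ℝ) + 1) ^ r + n) ^ 2 :=
        pow_le_pow_left₀ hn0.le (by linarith) 2
      rw [hfdef]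
      calc n * ((i : ℝ) + 1) ^ s / (((i : ℝ) + 1) ^ r + n) ^ 2
          ≤ n * ((i : ℝ) + 1) ^ s / n ^ 2 :=
            div_le_div_of_nonneg_left (by positivity) (by positivity) hden
        _ = ((i : ℝ) + 1) ^ s / n := by
            field_simp
        _ ≤ t ^ s / n := div_le_div_of_nonneg_right hs_le hn0.le
    calc ∑ i ∈ Finset.range M, f i ≤ ∑ _i ∈ Finset.range M, t ^ s / n :=
          Finset.sum_le_sum hterm
      _ = M * (t ^ s / n) := by rw [Finset.sum_const, Finset.card_range]; ring
      _ ≤ t * (t ^ s / n) := by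
          apply mul_le_mul_of_nonneg_right hMt
          positivity
      _ = t ^ (1 + s) / n := by
          rw [Real.rpow_add (by linarith : (0:ℝ) < t), Real.rpow_one]
          ring
      _ = B := by
          rw [htdef, hBdef, hexp, ← Real.rpow_mul hn0.le, Real.rpow_sub hn0, Real.rpow_one]
          congr 2
          field_simp
          ring
  -- tail bound
  have tail_bound : ∀ k, ∑ i ∈ Finset.Ico M k, f i ≤ (2 / c) * B := by
    intro k
    have hterm : ∀ i ∈ Finset.Ico M k, f i ≤ n * ((i : ℝ) + 1) ^ (-(c + 1)) := by
      intro i hi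
      rw [Finset.mem_Ico] at hi
      have hi1 : t < (i : ℝ) + 1 := by
        have h' : (M : ℝ) ≤ i := by exact_mod_cast hi.1
        linarith
      have hi0 : (0:ℝ) < (i : ℝ) + 1 := by linarith [ht_pos]
      have hir : n < ((i : ℝ) + 1) ^ r := by
        rw [← htr]
        exact Real.rpow_lt_rpow (by linarith) hi1 hr
      have hir0 : (0:ℝ) < ((i : ℝ) + 1) ^ r := by linarith
      have hden : (((i : ℝ) + 1) ^ r) ^ 2 ≤ (((i : ℝ) + 1) ^ r + n) ^ 2 :=
        pow_le_pow_left₀ hir0.le (by linarith) 2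
      rw [hfdef]
      have hs0 : (0:ℝ) < ((i : ℝ) + 1) ^ s := Real.rpow_pos_of_pos hi0 _
      calc n * ((i : ℝ) + 1) ^ s / (((i : ℝ) + 1) ^ r + n) ^ 2
          ≤ n * ((i : ℝ) + 1) ^ s / (((i : ℝ) + 1) ^ r) ^ 2 :=
            div_le_div_of_nonneg_left (by positivity) (by positivity) hden
        _ = n * ((i : ℝ) + 1) ^ (-(c + 1)) := by
            rw [← Real.rpow_natCast (((i : ℝ) + 1) ^ r) 2, ← Real.rpow_mul (le_of_lt hi0)]
            rw [mul_div_assoc, ← Real.rpow_sub hi0]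
            congr 2
            rw [hcdef]
            push_cast
            ring
    calc ∑ i ∈ Finset.Ico M k, f i ≤ ∑ i ∈ Finset.Ico M k, n * ((i : ℝ) + 1) ^ (-(c + 1)) :=
          Finset.sum_le_sum hterm
      _ = n * ∑ i ∈ Finset.Ico M k, ((i : ℝ) + 1) ^ (-(c + 1)) := by
          rw [Finset.mul_sum]
      _ ≤ n * ((M : ℝ) ^ (-c) / c) :=
          mul_le_mul_of_nonneg_left (tail_sum_le c hc M hM1 k) hn0.le
      _ ≤ n * (2 * t ^ (-c) / c) := by
          apply mul_le_mul_of_nonneg_left _ hn0.le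
          exact div_le_div_of_nonneg_right hMc hc.le
      _ = (2 / c) * (n * t ^ (-c)) := by ring
      _ = (2 / c) * B := by
          congr 1
          rw [htdef, hBdef, ← Real.rpow_mul hn0.le,
            show n * n ^ (1 / r * -c) = n ^ (1 + 1 / r * -c) by
              rw [Real.rpow_add hn0, Real.rpow_one]]
          congr 1
          rw [hcdef]
          field_simp
          ring
  -- combine
  apply Real.tsum_le_of_sum_range_le hf_pos
  intro k
  have hsplit : ∑ i ∈ Finset.range k, f i ≤ ∑ i ∈ Finset.range (max M k), f i := by
    apply Finset.sum_le_sum_of_subset_of_nonneg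
    · exact Finset.range_subset_range.mpr (le_max_right _ _)
    · intro i _ _; exact hf_pos i
  refine hsplit.trans ?_
  have hM_le : M ≤ max M k := le_max_left _ _
  rw [Finset.range_eq_Ico, ← Finset.sum_Ico_consecutive _ (Nat.zero_le M) hM_le]
  rw [← Finset.range_eq_Ico]
  calc ∑ i ∈ Finset.range M, f i + ∑ i ∈ Finset.Ico M (max M k), f i
      ≤ B + (2 / c) * B := add_le_add head_bound (tail_bound (max M k))
    _ ≤ (3 + 2 / c) * B := by nlinarith [hB_pos]
end

section
/- With θ_0 as in the counterexample construction (θ_{0,i} = K n^{−(1/2+β)/(1+2β+2p)} for N ≤ i < 2N where N = n^{1/(1+2β+2p)}, zero on that range otherwise), and l a sequence with ∑_{i=j}^{j+K_0−1} l_i^2 ≥ R^{−2} j^{−1−2q} for j > j_0, the bias at smoothing level α ≥ β satisfies B_n^L(α) = |∑_{N ≤ i < 2N} l_i θ_{0,i} / (1 + n i^{−1−2α} κ_i^2)| ≥ c · n^{−(β+q)/(1+2β+2p)} for a constant c > 0 and all sufficiently large n, provided all l_i ≥ 0 on the block. -/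
/-!
For `α ≥ β` and `i ≥ N = n^{1/(1+2β+2p)}` we have `n i^{-1-2α} κ_i² ≤ C² n i^{-(1+2α+2p)} ≤ C²`,
so every shrinkage factor is at least `1/(1+C²)` and the bias is at least a constant times
`K n^{-(1/2+β)/(1+2β+2p)} ∑_{N ≤ i < 2N} l_i`. As the `l_i` are nonnegative, a block of `K₀`
consecutive indices starting at `j ∈ [N, 3N]` has `∑ l_i ≥ (∑ l_i²)^{1/2} ≥ R⁻¹ j^{-1/2-q} ≳ N^{-1/2-q}`,
and `[N, 2N)` contains `≳ N/K₀` disjoint such blocks. Hence `∑ l_i ≳ N^{1/2-q}`, which is the rate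
`n^{-(β+q)/(1+2β+2p)}`.
-/

open Real Finset

lemma nat_mul_le_sum_Ico_of_le_block_sums {f : ℕ → ℝ} {N M K : ℕ} {b : ℝ}
    (hf : ∀ i ∈ Ico N M, 0 ≤ f i)
    (hblock : ∀ j, N ≤ j → j + K ≤ M → b ≤ ∑ i ∈ Ico j (j + K), f i) :
    (((M - N) / K : ℕ) : ℝ) * b ≤ ∑ i ∈ Ico N M, f i := by
  have hblocks : ∀ m : ℕ, N + m * K ≤ M → (m : ℝ) * b ≤ ∑ i ∈ Ico N (N + m * K), f i := by
    intro m
    induction m with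
    | zero => simp
    | succ m ih =>
      intro hm
      have hsplit : N + (m + 1) * K = N + m * K + K := by ring
      rw [hsplit, ← sum_Ico_consecutive f (Nat.le_add_right N (m * K)) (Nat.le_add_right _ K)]
      push_cast
      linarith [ih (by omega), hblock (N + m * K) (Nat.le_add_right _ _) (by omega)]
  rcases lt_or_ge M N with hMN | hNM
  · simp [Nat.sub_eq_zero_of_le hMN.le, Ico_eq_empty_of_le hMN.le]
  have hfit : N + (M - N) / K * K ≤ M := by
    have := Nat.div_mul_le_self (M - N) K
    omega
  calc (((M - N) / K : ℕ) : ℝ) * b ≤ ∑ i ∈ Ico N (N + (M - N) / K * K), f i := hblocks _ hfit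
    _ ≤ ∑ i ∈ Ico N M, f i :=
      sum_le_sum_of_subset_of_nonneg (Ico_subset_Ico le_rfl hfit) fun i hi _ => hf i hi

lemma le_sum_of_sq_le_sum_sq {ι : Type*} {s : Finset ι} {f : ι → ℝ} {a : ℝ}
    (hf : ∀ i ∈ s, 0 ≤ f i) (ha : 0 ≤ a) (h : a ^ 2 ≤ ∑ i ∈ s, f i ^ 2) :
    a ≤ ∑ i ∈ s, f i :=
  (pow_le_pow_iff_left₀ ha (sum_nonneg hf) two_ne_zero).1
    (h.trans (sum_sq_le_sq_sum_of_nonneg hf))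

lemma min_one_rpow_mul_rpow_le_rpow {x y a : ℝ} (e : ℝ) (hx : 0 < x) (hxy : x ≤ y)
    (hya : y ≤ a * x) : min 1 (a ^ e) * x ^ e ≤ y ^ e := by
  have ha : 0 ≤ a := nonneg_of_mul_nonneg_left (hx.le.trans (hxy.trans hya)) hx
  rcases le_total e 0 with he | he
  · calc min 1 (a ^ e) * x ^ e ≤ a ^ e * x ^ e := by gcongr; exact min_le_right _ _
      _ = (a * x) ^ e := (mul_rpow ha hx.le).symm
      _ ≤ y ^ e := rpow_le_rpow_of_nonpos (hx.trans_le hxy) hya he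
  · calc min 1 (a ^ e) * x ^ e ≤ 1 * x ^ e := by gcongr; exact min_le_left _ _
      _ = x ^ e := one_mul _
      _ ≤ y ^ e := rpow_le_rpow hx.le hxy he

lemma div_two_mul_le_ceil_sub_ceil_div {x : ℝ} {K : ℕ} (hK : 0 < K) (hx : 2 * K + 2 ≤ x) :
    x / (2 * K) ≤ (((⌈2 * x⌉₊ - ⌈x⌉₊) / K : ℕ) : ℝ) := by
  have hK' : (0 : ℝ) < K := by exact_mod_cast hK
  set D := ⌈2 * x⌉₊ - ⌈x⌉₊
  have hD : x - 1 ≤ (D : ℝ) := by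
    have h2x : 2 * x ≤ ⌈2 * x⌉₊ := Nat.le_ceil _
    have hx1 : (⌈x⌉₊ : ℝ) < x + 1 := Nat.ceil_lt_add_one (by linarith)
    have hle : ⌈x⌉₊ ≤ ⌈2 * x⌉₊ := Nat.ceil_le_ceil (by linarith)
    rw [Nat.cast_sub hle]
    linarith
  have hdiv : (D : ℝ) < ((D / K : ℕ) + 1) * K := by
    have := Nat.lt_div_mul_add (a := D) hK
    exact_mod_cast (by rw [add_mul, one_mul]; exact this : D < (D / K + 1) * K)
  rw [div_le_iff₀ (by positivity)]
  nlinarith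

lemma le_sum_Ico_ceil_of_le_block_sum_sq {l : ℕ → ℝ} {R q x : ℝ} {K₀ j₀ : ℕ} (hR : 0 < R)
    (hK₀ : 1 ≤ K₀)
    (hl : ∀ j : ℕ, j₀ < j →
      (1 / R ^ 2) * (j : ℝ) ^ (-1 - 2 * q) ≤ ∑ i ∈ Icc j (j + K₀ - 1), l i ^ 2)
    (hx : 2 * K₀ + j₀ + 2 ≤ x) (hnn : ∀ i ∈ Ico ⌈x⌉₊ ⌈2 * x⌉₊, 0 ≤ l i) :
    x / (2 * K₀) * (R⁻¹ * (min 1 ((3 : ℝ) ^ (-(1 / 2 + q))) * x ^ (-(1 / 2 + q)))) ≤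
      ∑ i ∈ Ico ⌈x⌉₊ ⌈2 * x⌉₊, l i := by
  set e := -(1 / 2 + q)
  have hj₀x : (j₀ : ℝ) + 2 ≤ x := by linarith [(Nat.cast_nonneg K₀ : (0 : ℝ) ≤ K₀)]
  have hx0 : 0 < x := by linarith [(Nat.cast_nonneg j₀ : (0 : ℝ) ≤ j₀)]
  have hb : 0 ≤ R⁻¹ * (min 1 ((3 : ℝ) ^ e) * x ^ e) :=
    mul_nonneg (inv_nonneg.2 hR.le)
      (mul_nonneg (le_min zero_le_one (rpow_nonneg (by norm_num) e)) (rpow_nonneg hx0.le e))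
  refine (mul_le_mul_of_nonneg_right (div_two_mul_le_ceil_sub_ceil_div hK₀ (by linarith)) hb).trans
    (nat_mul_le_sum_Ico_of_le_block_sums hnn fun j hj hjM => ?_)
  have hxj : x ≤ j := (Nat.le_ceil x).trans (by exact_mod_cast hj)
  have hj3x : (j : ℝ) ≤ 3 * x := by
    have : (j : ℝ) ≤ ⌈2 * x⌉₊ := by exact_mod_cast (Nat.le_add_right j K₀).trans hjM
    linarith [Nat.ceil_lt_add_one (by linarith : (0 : ℝ) ≤ 2 * x)]
  have hj₀j : j₀ < j := by exact_mod_cast (by linarith : (j₀ : ℝ) < j)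
  have hIcc : Icc j (j + K₀ - 1) = Ico j (j + K₀) := by
    ext i; simp only [mem_Icc, mem_Ico]; omega
  have hblock : R⁻¹ * (j : ℝ) ^ e ≤ ∑ i ∈ Ico j (j + K₀), l i := by
    refine le_sum_of_sq_le_sum_sq (fun i hi => hnn i ?_) (by positivity) ?_
    · simp only [mem_Ico] at hi ⊢; omega
    · rw [← hIcc, mul_pow, ← rpow_mul_natCast (Nat.cast_nonneg j)]
      convert hl j hj₀j using 2
      · rw [inv_pow, one_div]
      · congr 1; simp only [e]; ring
  calc R⁻¹ * (min 1 ((3 : ℝ) ^ e) * x ^ e) ≤ R⁻¹ * (j : ℝ) ^ e := by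
        gcongr; exact min_one_rpow_mul_rpow_le_rpow e hx0 hxj hj3x
    _ ≤ _ := hblock

lemma le_rpow_of_rpow_one_div_le {n i s t : ℝ} (hn : 0 ≤ n) (hs : 0 < s) (hst : s ≤ t)
    (hi : 1 ≤ i) (hni : n ^ (1 / s) ≤ i) : n ≤ i ^ t := by
  rw [one_div, rpow_inv_le_iff_of_pos hn (by linarith) hs] at hni
  exact hni.trans (rpow_le_rpow_of_exponent_le hi hst)

lemma mul_rpow_neg_mul_sq_le {n i κ C α p s : ℝ} (hn : 0 ≤ n) (hs : 0 < s)
    (hsα : s ≤ 1 + 2 * α + 2 * p) (hi : 1 ≤ i) (hni : n ^ (1 / s) ≤ i)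
    (hκ : κ ^ 2 ≤ C ^ 2 * i ^ (-(2 * p))) : n * i ^ (-(1 + 2 * α)) * κ ^ 2 ≤ C ^ 2 := by
  have hi0 : 0 < i := by linarith
  have hpow : i ^ (-(1 + 2 * α)) * i ^ (-(2 * p)) = (i ^ (1 + 2 * α + 2 * p))⁻¹ := by
    rw [← rpow_add hi0, ← rpow_neg hi0.le]; ring_nf
  calc n * i ^ (-(1 + 2 * α)) * κ ^ 2 ≤ n * i ^ (-(1 + 2 * α)) * (C ^ 2 * i ^ (-(2 * p))) := by
        gcongr
    _ = C ^ 2 * (n / i ^ (1 + 2 * α + 2 * p)) := by rw [div_eq_mul_inv, ← hpow]; ring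
    _ ≤ C ^ 2 * 1 := by
        gcongr
        exact div_le_one_of_le₀ (le_rpow_of_rpow_one_div_le hn hs hsα hi hni) (by positivity)
    _ = C ^ 2 := mul_one _

lemma div_mul_sum_le_sum_mul_div {ι : Type*} {s : Finset ι} {f D : ι → ℝ} {A E : ℝ}
    (hA : 0 ≤ A) (hf : ∀ i ∈ s, 0 ≤ f i) (hD : ∀ i ∈ s, 0 < D i ∧ D i ≤ E) :
    A / E * ∑ i ∈ s, f i ≤ ∑ i ∈ s, f i * A / D i := by
  rw [mul_sum]
  refine sum_le_sum fun i hi => ?_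
  obtain ⟨hD0, hDE⟩ := hD i hi
  calc A / E * f i = f i * A / E := by ring
    _ ≤ f i * A / D i := div_le_div_of_nonneg_left (mul_nonneg (hf i hi) hA) hD0 hDE

theorem counterexample_bias_lower_bound_general (β p q R C Kamp α : ℝ) (K₀ j₀ : ℕ)
    (hβ : 0 < β) (hp : 0 ≤ p) (hR : 0 < R)
    (hKamp : 0 < Kamp) (hK₀ : 1 ≤ K₀) (hα : β ≤ α)
    (l κ : ℕ → ℝ)
    (hl : ∀ j : ℕ, j₀ < j →
      (1 / R ^ 2) * (j : ℝ) ^ (-1 - 2 * q) ≤ ∑ i ∈ Finset.Icc j (j + K₀ - 1), (l i) ^ 2)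
    (hκ : ∀ i : ℕ, 1 ≤ i →
      C⁻¹ ^ 2 * (i : ℝ) ^ (-(2 * p)) ≤ (κ i) ^ 2 ∧ (κ i) ^ 2 ≤ C ^ 2 * (i : ℝ) ^ (-(2 * p))) :
    ∃ c > 0, ∃ n₀ : ℝ, ∀ n : ℝ, n₀ ≤ n →
      (∀ i ∈ Finset.Ico ⌈n ^ (1 / (1 + 2 * β + 2 * p))⌉₊ ⌈2 * n ^ (1 / (1 + 2 * β + 2 * p))⌉₊,
        0 ≤ l i) →
      c * n ^ (-(β + q) / (1 + 2 * β + 2 * p)) ≤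
        |∑ i ∈ Finset.Ico ⌈n ^ (1 / (1 + 2 * β + 2 * p))⌉₊
            ⌈2 * n ^ (1 / (1 + 2 * β + 2 * p))⌉₊,
          l i * (Kamp * n ^ (-(1 / 2 + β) / (1 + 2 * β + 2 * p))) /
            (1 + n * (i : ℝ) ^ (-(1 + 2 * α)) * (κ i) ^ 2)| := by
  set s := 1 + 2 * β + 2 * p
  have hs : 0 < s := by positivity
  set e := -(1 / 2 + q)
  set c₂ := min 1 ((3 : ℝ) ^ e)
  have hc₂ : 0 < c₂ := lt_min one_pos (rpow_pos_of_pos (by norm_num) e)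
  set T : ℝ := 2 * K₀ + j₀ + 2
  have hT : 0 < T := by positivity
  refine ⟨Kamp * c₂ / ((1 + C ^ 2) * (2 * K₀) * R), by positivity, T ^ s, fun n hn hnn => ?_⟩
  have hn0 : 0 < n := (rpow_pos_of_pos hT s).trans_le hn
  set x := n ^ (1 / s)
  have hTx : T ≤ x := by
    change T ≤ n ^ (1 / s); rwa [one_div, le_rpow_inv_iff_of_pos hT.le hn0.le hs]
  have hx1 : 1 ≤ x := by
    have : (0 : ℝ) ≤ 2 * K₀ + j₀ := by positivity
    simp only [T] at hTx; linarith
  set A := Kamp * n ^ (-(1 / 2 + β) / s)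
  have hden : ∀ i ∈ Ico ⌈x⌉₊ ⌈2 * x⌉₊,
      0 < 1 + n * (i : ℝ) ^ (-(1 + 2 * α)) * κ i ^ 2 ∧
        1 + n * (i : ℝ) ^ (-(1 + 2 * α)) * κ i ^ 2 ≤ 1 + C ^ 2 := by
    intro i hi
    have hxi : x ≤ i := (Nat.le_ceil x).trans (by exact_mod_cast (mem_Ico.1 hi).1)
    have hi1 : (1 : ℝ) ≤ i := hx1.trans hxi
    obtain ⟨-, hκi⟩ := hκ i (by exact_mod_cast hi1)
    exact ⟨by positivity,
      add_le_add_right (mul_rpow_neg_mul_sq_le (α := α) hn0.le hs (by linarith) hi1 hxi hκi) 1⟩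
  have hrate : n ^ (-(β + q) / s) = n ^ (-(1 / 2 + β) / s) * (x * x ^ e) := by
    rw [← rpow_mul hn0.le, ← rpow_add hn0, ← rpow_add hn0]
    congr 1
    field_simp
    ring
  calc Kamp * c₂ / ((1 + C ^ 2) * (2 * K₀) * R) * n ^ (-(β + q) / s)
      = A / (1 + C ^ 2) * (x / (2 * K₀) * (R⁻¹ * (c₂ * x ^ e))) := by
        rw [hrate]; simp only [A]; field_simp
    _ ≤ A / (1 + C ^ 2) * ∑ i ∈ Ico ⌈x⌉₊ ⌈2 * x⌉₊, l i := by
        gcongr; exact le_sum_Ico_ceil_of_le_block_sum_sq hR hK₀ hl hTx hnn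
    _ ≤ ∑ i ∈ Ico ⌈x⌉₊ ⌈2 * x⌉₊, l i * A / (1 + n * (i : ℝ) ^ (-(1 + 2 * α)) * κ i ^ 2) :=
        div_mul_sum_le_sum_mul_div (by positivity) hnn hden
    _ ≤ _ := le_abs_self _

/-- Lower bound for the bias of the counterexample sequence at smoothing levels `α ≥ β`:
`B_n^L(α) ≳ n^{-(β+q)/(1+2β+2p)}`. -/
theorem counterexample_bias_lower_bound (β p q R C Kamp α : ℝ) (K₀ j₀ : ℕ)
    (hβ : 0 < β) (hp : 0 ≤ p) (hq : q < 1 / 2) (hR : 0 < R) (hC : 0 < C)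
    (hKamp : 0 < Kamp) (hK₀ : 1 ≤ K₀) (hα : β ≤ α)
    (l κ : ℕ → ℝ)
    (hl : ∀ j : ℕ, j₀ < j →
      (1 / R ^ 2) * (j : ℝ) ^ (-1 - 2 * q) ≤ ∑ i ∈ Finset.Icc j (j + K₀ - 1), (l i) ^ 2)
    (hκ : ∀ i : ℕ, 1 ≤ i →
      C⁻¹ ^ 2 * (i : ℝ) ^ (-(2 * p)) ≤ (κ i) ^ 2 ∧ (κ i) ^ 2 ≤ C ^ 2 * (i : ℝ) ^ (-(2 * p))) :
    ∃ c > 0, ∃ n₀ : ℝ, ∀ n : ℝ, n₀ ≤ n →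
      (∀ i ∈ Finset.Ico ⌈n ^ (1 / (1 + 2 * β + 2 * p))⌉₊ ⌈2 * n ^ (1 / (1 + 2 * β + 2 * p))⌉₊,
        0 ≤ l i) →
      c * n ^ (-(β + q) / (1 + 2 * β + 2 * p)) ≤
        |∑ i ∈ Finset.Ico ⌈n ^ (1 / (1 + 2 * β + 2 * p))⌉₊
            ⌈2 * n ^ (1 / (1 + 2 * β + 2 * p))⌉₊,
          l i * (Kamp * n ^ (-(1 / 2 + β) / (1 + 2 * β + 2 * p))) /
            (1 + n * (i : ℝ) ^ (-(1 + 2 * α)) * (κ i) ^ 2)| :=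
  counterexample_bias_lower_bound_general β p q R C Kamp α K₀ j₀ hβ hp hR hKamp hK₀ hα l κ hl hκ
end
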